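/- arXiv:1110.5111 — 8 statements merged into one kernel-verified Lean document; each statement's English description precedes it below -/
import Mathlib

section
/- Let G be a connected claw-free trigraph containing a homogeneous set X that is not a strong clique. Then X is strongly complete to V(G) \ X and α(G) = 2; furthermore, if G is quasi-line then X is the union of two strong cliques. -/
/-- A trigraph on a vertex type `V`: a symmetric adjacency function with values in
`{1, 0, -1}`, zero on the diagonal, such that semiedges form a matching. -/
structure Trigraph (V : Type) where
  θ : V → V → ℤ
  range_mem : ∀ u v, θ u v = 1 ∨ θ u v = 0 ∨ θ u v = -1
  symm : ∀ u v, θ u v = θ v u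
  refl_zero : ∀ v, θ v v = 0
  semi_matching : ∀ u v w : V, u ≠ v → u ≠ w → v ≠ w → θ u v = 0 → θ u w ≠ 0

namespace Trigraph

variable {V V' V'' : Type}

/-- `u` and `v` are strongly adjacent. -/
def StrongAdj (G : Trigraph V) (u v : V) : Prop := G.θ u v = 1

/-- Distinct `u` and `v` are semiadjacent. -/
def SemiAdj (G : Trigraph V) (u v : V) : Prop := u ≠ v ∧ G.θ u v = 0

/-- Distinct `u` and `v` are adjacent. -/
def Adj (G : Trigraph V) (u v : V) : Prop := u ≠ v ∧ (G.θ u v = 1 ∨ G.θ u v = 0)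

/-- Distinct `u` and `v` are antiadjacent. -/
def AntiAdj (G : Trigraph V) (u v : V) : Prop := u ≠ v ∧ (G.θ u v = 0 ∨ G.θ u v = -1)

/-- `u` and `v` are strongly antiadjacent. -/
def StrongAntiAdj (G : Trigraph V) (u v : V) : Prop := G.θ u v = -1

/-- `X` is strongly complete to `Y`. -/
def StronglyComplete (G : Trigraph V) (X Y : Set V) : Prop :=
  ∀ u ∈ X, ∀ v ∈ Y, G.StrongAdj u v

/-- `X` is strongly anticomplete to `Y`. -/
def StronglyAnticomplete (G : Trigraph V) (X Y : Set V) : Prop :=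
  ∀ u ∈ X, ∀ v ∈ Y, G.StrongAntiAdj u v

/-- A strong clique: pairwise strongly adjacent vertices. -/
def IsStrongClique (G : Trigraph V) (K : Set V) : Prop := K.Pairwise G.StrongAdj

/-- A stable set: pairwise antiadjacent vertices. -/
def IsStableSet (G : Trigraph V) (S : Set V) : Prop := S.Pairwise G.AntiAdj

/-- The neighbourhood of a vertex: the set of vertices adjacent to it. -/
def neighborhood (G : Trigraph V) (v : V) : Set V := {u | G.Adj v u}

/-- Claw-free: no vertex has three pairwise antiadjacent vertices in its neighbourhood. -/
def ClawFree (G : Trigraph V) : Prop :=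
  ¬ ∃ v a b c : V, G.Adj v a ∧ G.Adj v b ∧ G.Adj v c ∧
    G.AntiAdj a b ∧ G.AntiAdj a c ∧ G.AntiAdj b c

/-- Cobipartite: the vertex set is the union of two strong cliques. -/
def Cobipartite (G : Trigraph V) : Prop :=
  ∃ K1 K2 : Set V, G.IsStrongClique K1 ∧ G.IsStrongClique K2 ∧ K1 ∪ K2 = Set.univ

/-- Quasi-line: the neighbourhood of every vertex is the union of two strong cliques. -/
def QuasiLine (G : Trigraph V) : Prop :=
  ∀ v : V, ∃ K1 K2 : Set V, G.IsStrongClique K1 ∧ G.IsStrongClique K2 ∧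
    G.neighborhood v = K1 ∪ K2

/-- Connected: any two vertices are joined by a sequence of consecutively adjacent vertices. -/
def Connected (G : Trigraph V) : Prop :=
  ∀ u v : V, Relation.ReflTransGen G.Adj u v

/-- Non-degenerate: quasi-line and not cobipartite, or claw-free with stability number ≥ 3. -/
def NonDegenerate (G : Trigraph V) : Prop :=
  (G.QuasiLine ∧ ¬ G.Cobipartite) ∨
  (G.ClawFree ∧ ∃ S : Set V, G.IsStableSet S ∧ 3 ≤ S.ncard)

/-- A homogeneous set: `|V| > |X| ≥ 2` and every vertex outside `X` is strongly complete
or strongly anticomplete to `X`. -/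
def HomogeneousSet (G : Trigraph V) (X : Set V) : Prop :=
  2 ≤ X.ncard ∧ X ≠ Set.univ ∧
  ∀ v ∉ X, G.StronglyComplete {v} X ∨ G.StronglyAnticomplete {v} X

/-- `v1 v2 v3 v4` is a square: the pairs `v1v3`, `v2v4` are antiadjacent and the other
four pairs are adjacent. -/
def IsSquare (G : Trigraph V) (v1 v2 v3 v4 : V) : Prop :=
  G.AntiAdj v1 v3 ∧ G.AntiAdj v2 v4 ∧
  G.Adj v1 v2 ∧ G.Adj v2 v3 ∧ G.Adj v3 v4 ∧ G.Adj v4 v1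

/-- `X` contains a square. -/
def HasSquareIn (G : Trigraph V) (X : Set V) : Prop :=
  ∃ v1 v2 v3 v4 : V, G.IsSquare v1 v2 v3 v4 ∧ ({v1, v2, v3, v4} : Set V) ⊆ X

/-- Homogeneous pair of strong cliques `(A, B)`. -/
def HPOSC (G : Trigraph V) (A B : Set V) : Prop :=
  A.Nonempty ∧ B.Nonempty ∧ Disjoint A B ∧
  G.IsStrongClique A ∧ G.IsStrongClique B ∧
  ¬ (∃ a b : V, A = {a} ∧ B = {b}) ∧
  ∀ v ∉ A ∪ B,
    (G.StronglyComplete {v} A ∨ G.StronglyAnticomplete {v} A) ∧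
    (G.StronglyComplete {v} B ∨ G.StronglyAnticomplete {v} B)

/-- Deletion-minimal homogeneous pair of strong cliques. -/
def DeletionMinimal (G : Trigraph V) (A B : Set V) : Prop :=
  G.HPOSC A B ∧ G.HasSquareIn (A ∪ B) ∧
  (∀ a ∈ A, ¬ G.StronglyComplete {a} B ∧ ¬ G.StronglyAnticomplete {a} B) ∧
  (∀ b ∈ B, ¬ G.StronglyComplete {b} A ∧ ¬ G.StronglyAnticomplete {b} A)

/-- There is a square contained in `X` intersecting both `S1` and `S2`. -/
def SquareMeets (G : Trigraph V) (X S1 S2 : Set V) : Prop :=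
  ∃ v1 v2 v3 v4 : V, G.IsSquare v1 v2 v3 v4 ∧ ({v1, v2, v3, v4} : Set V) ⊆ X ∧
    (({v1, v2, v3, v4} : Set V) ∩ S1).Nonempty ∧
    (({v1, v2, v3, v4} : Set V) ∩ S2).Nonempty

/-- Square-connected homogeneous pair of strong cliques. -/
def SquareConnected (G : Trigraph V) (A B : Set V) : Prop :=
  G.HPOSC A B ∧
  (∀ A' A'' : Set V, A'.Nonempty → A''.Nonempty → A' ∪ A'' = A → Disjoint A' A'' →
    G.SquareMeets (A ∪ B) A' A'') ∧
  (∀ B' B'' : Set V, B'.Nonempty → B''.Nonempty → B' ∪ B'' = B → Disjoint B' B'' →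
    G.SquareMeets (A ∪ B) B' B'')

/-- Inclusion-maximal square-connected homogeneous pair of strong cliques. -/
def MaxSquareConnected (G : Trigraph V) (A B : Set V) : Prop :=
  G.SquareConnected A B ∧
  ∀ A' B' : Set V, G.SquareConnected A' B' → A ⊆ A' → B ⊆ B' → A' = A ∧ B' = B

/-- Two homogeneous pairs have skew intersection if a part of one intersects both
parts of the other. -/
def SkewIntersection (A1 B1 A2 B2 : Set V) : Prop :=
  ((A1 ∩ A2).Nonempty ∧ (A1 ∩ B2).Nonempty) ∨
  ((B1 ∩ A2).Nonempty ∧ (B1 ∩ B2).Nonempty) ∨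
  ((A2 ∩ A1).Nonempty ∧ (A2 ∩ B1).Nonempty) ∨
  ((B2 ∩ A1).Nonempty ∧ (B2 ∩ B1).Nonempty)

/-- Laminar: contains no square-connected homogeneous pair of strong cliques. -/
def Laminar (G : Trigraph V) : Prop := ¬ ∃ A B : Set V, G.SquareConnected A B

/-- `G` is a thickening of `G'` via the map `I` (equivalently, `G'` is an antithickening
of `G`): the `I v` are nonempty strong cliques partitioning `V(G)` respecting adjacency. -/
def IsThickening (G : Trigraph V) (G' : Trigraph V') (I : V' → Set V) : Prop :=
  (∀ v : V', (I v).Nonempty ∧ G.IsStrongClique (I v)) ∧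
  (∀ u v : V', u ≠ v → Disjoint (I u) (I v)) ∧
  (⋃ v : V', I v) = Set.univ ∧
  ∀ u v : V', u ≠ v →
    (G'.StrongAdj u v → G.StronglyComplete (I u) (I v)) ∧
    (G'.StrongAntiAdj u v → G.StronglyAnticomplete (I u) (I v)) ∧
    (G'.SemiAdj u v →
      ¬ G.StronglyComplete (I u) (I v) ∧ ¬ G.StronglyAnticomplete (I u) (I v))

/-- `G'` (with thickening map `I`) is an optimal antithickening of `G`: it is a laminar
antithickening with the maximum possible number of vertices. -/
def OptimalAntithickening (G : Trigraph V) (G' : Trigraph V') (I : V' → Set V) : Prop :=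
  G.IsThickening G' I ∧ G'.Laminar ∧
  ∀ (W : Type) (H : Trigraph W) (J : W → Set V),
    G.IsThickening H J → H.Laminar → Nat.card W ≤ Nat.card V'

/-- Isomorphism of trigraphs. -/
def Isomorphic (G1 : Trigraph V) (G2 : Trigraph V') : Prop :=
  ∃ f : V ≃ V', ∀ u v : V, G2.θ (f u) (f v) = G1.θ u v

end Trigraph
/-- Let G be a connected claw-free trigraph containing a homogeneous set X
that is not a strong clique. Then X is strongly complete to V(G) \ X and α(G) = 2;
furthermore, if G is quasi-line then X is the union of two strong cliques. -/
theorem homogeneous_set_not_clique {V : Type} [Fintype V] (G : Trigraph V)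
    (hconn : G.Connected) (hcf : G.ClawFree) (X : Set V)
    (hX : G.HomogeneousSet X) (hnc : ¬ G.IsStrongClique X) :
    G.StronglyComplete X Xᶜ ∧
    ((∃ S : Set V, G.IsStableSet S ∧ S.ncard = 2) ∧
      (∀ S : Set V, G.IsStableSet S → S.ncard ≤ 2)) ∧
    (G.QuasiLine →
      ∃ K1 K2 : Set V, G.IsStrongClique K1 ∧ G.IsStrongClique K2 ∧ X = K1 ∪ K2) := by

  obtain ⟨hcard, hne, hout⟩ := hX
  -- extract antiadjacent a b in X
  have hab : ∃ a ∈ X, ∃ b ∈ X, a ≠ b ∧ ¬ G.StrongAdj a b := by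
    by_contra h
    push_neg at h
    exact hnc fun a ha b hb hne => h a ha b hb hne
  obtain ⟨a, ha, b, hb, hab_ne, hab_ns⟩ := hab
  have hab_anti : G.AntiAdj a b := by
    refine ⟨hab_ne, ?_⟩
    rcases G.range_mem a b with h | h | h
    · exact absurd h hab_ns
    · exact Or.inl h
    · exact Or.inr h
  -- no vertex outside X is strongly anticomplete to X
  have hnoD : ∀ d ∉ X, ¬ G.StronglyAnticomplete {d} X := by
    intro d hdX hdanti
    have key : ∀ w : V, Relation.ReflTransGen G.Adj a w →
        ¬ (w ∉ X ∧ G.StronglyAnticomplete {w} X) := by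
      intro w hpath
      induction hpath with
      | refl => intro ⟨hw, _⟩; exact hw ha
      | @tail u w hp hadj ih =>
        intro ⟨hwX, hwanti⟩
        by_cases huX : u ∈ X
        · have : G.θ w u = -1 := hwanti w rfl u huX
          have : G.θ u w = -1 := by rw [G.symm]; exact this
          rcases hadj.2 with h | h <;> omega
        · rcases hout u huX with hcomp | hanti
          · -- claw at u with a, b, w
            have hua : G.Adj u a := ⟨fun h => huX (h ▸ ha), Or.inl (hcomp u rfl a ha)⟩
            have hub : G.Adj u b := ⟨fun h => huX (h ▸ hb), Or.inl (hcomp u rfl b hb)⟩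
            have hwa : G.AntiAdj a w := by
              refine ⟨fun h => hwX (h ▸ ha), Or.inr ?_⟩
              rw [G.symm]; exact hwanti w rfl a ha
            have hwb : G.AntiAdj b w := by
              refine ⟨fun h => hwX (h ▸ hb), Or.inr ?_⟩
              rw [G.symm]; exact hwanti w rfl b hb
            exact hcf ⟨u, a, b, w, hua, hub, hadj, hab_anti, hwa, hwb⟩
          · exact ih ⟨huX, hanti⟩
    exact key d (hconn a d) ⟨hdX, hdanti⟩
  -- X strongly complete to complement
  have hSC : G.StronglyComplete X Xᶜ := by
    intro x hx v hv
    rcases hout v hv with hcomp | hanti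
    · show G.θ x v = 1
      rw [G.symm]; exact hcomp v rfl x hx
    · exact absurd hanti (hnoD v hv)
  -- a vertex outside X
  obtain ⟨v0, hv0⟩ : ∃ v, v ∉ X := by
    by_contra h
    push_neg at h
    exact hne (Set.eq_univ_of_forall h)
  refine ⟨hSC, ⟨⟨{a, b}, ?_, Set.ncard_pair hab_ne⟩, ?_⟩, ?_⟩
  · -- {a,b} is stable
    intro x hx y hy hxy
    rcases hx with rfl | rfl <;> rcases hy with rfl | rfl
    · exact absurd rfl hxy
    · exact hab_anti
    · exact ⟨hxy, by rw [G.symm]; exact hab_anti.2⟩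
    · exact absurd rfl hxy
  · -- stability number ≤ 2
    intro S hS
    by_contra hgt
    push_neg at hgt
    have h3 : 3 ≤ S.ncard := hgt
    obtain ⟨T, hTS, hT3⟩ := Set.exists_subset_card_eq h3
    obtain ⟨s1, s2, s3, h12, h13, h23, rfl⟩ := Set.ncard_eq_three.mp hT3
    have hs1 : s1 ∈ S := hTS (by simp)
    have hs2 : s2 ∈ S := hTS (by simp)
    have hs3 : s3 ∈ S := hTS (by simp)
    have ha12 : G.AntiAdj s1 s2 := hS hs1 hs2 h12
    have ha13 : G.AntiAdj s1 s3 := hS hs1 hs3 h13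
    have ha23 : G.AntiAdj s2 s3 := hS hs2 hs3 h23
    -- no pair crossing X / Xᶜ can be antiadjacent
    have hcross : ∀ x y : V, x ∈ X → y ∉ X → ¬ G.AntiAdj x y := by
      intro x y hx hy hanti
      have : G.θ x y = 1 := hSC x hx y hy
      rcases hanti.2 with h | h <;> omega
    have hsame : ∀ x y : V, G.AntiAdj x y → (x ∈ X ↔ y ∈ X) := by
      intro x y hxy
      constructor
      · intro hx; by_contra hy; exact hcross x y hx hy hxy
      · intro hy; by_contra hx
        exact hcross y x hy hx ⟨hxy.1.symm, by rw [G.symm]; exact hxy.2⟩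
    by_cases h1X : s1 ∈ X
    · -- all in X; claw at v0
      have h2X : s2 ∈ X := (hsame s1 s2 ha12).mp h1X
      have h3X : s3 ∈ X := (hsame s1 s3 ha13).mp h1X
      have hadj : ∀ s ∈ X, G.Adj v0 s := fun s hs =>
        ⟨fun h => hv0 (h ▸ hs), Or.inl (by rw [G.symm]; exact hSC s hs v0 hv0)⟩
      exact hcf ⟨v0, s1, s2, s3, hadj s1 h1X, hadj s2 h2X, hadj s3 h3X, ha12, ha13, ha23⟩
    · -- all outside X; claw at a
      have h2X : s2 ∉ X := fun h => h1X ((hsame s1 s2 ha12).mpr h)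
      have h3X : s3 ∉ X := fun h => h1X ((hsame s1 s3 ha13).mpr h)
      have hadj : ∀ s, s ∉ X → G.Adj a s := fun s hs =>
        ⟨fun h => hs (h ▸ ha), Or.inl (hSC a ha s hs)⟩
      exact hcf ⟨a, s1, s2, s3, hadj s1 h1X, hadj s2 h2X, hadj s3 h3X, ha12, ha13, ha23⟩
  · -- quasi-line case
    intro hQL
    obtain ⟨K1, K2, hK1, hK2, hN⟩ := hQL v0
    refine ⟨K1 ∩ X, K2 ∩ X, hK1.mono Set.inter_subset_left,
      hK2.mono Set.inter_subset_left, ?_⟩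
    ext x
    constructor
    · intro hx
      have : x ∈ G.neighborhood v0 :=
        ⟨fun h => hv0 (h ▸ hx), Or.inl (by rw [G.symm]; exact hSC x hx v0 hv0)⟩
      rw [hN] at this
      rcases this with h | h
      · exact Or.inl ⟨h, hx⟩
      · exact Or.inr ⟨h, hx⟩
    · intro hx
      rcases hx with ⟨_, h⟩ | ⟨_, h⟩ <;> exact h
end

section
/- No connected non-degenerate trigraph contains a homogeneous set that is not a strong clique. -/
section Aux

variable {V : Type}

lemma aux_strongAdj_symm (G : Trigraph V) {u v : V} (h : G.StrongAdj u v) :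
    G.StrongAdj v u := by
  show G.θ v u = 1
  rw [G.symm]; exact h

lemma aux_quasiline_clawfree (G : Trigraph V) (h : G.QuasiLine) : G.ClawFree := by
  rintro ⟨v, a, b, c, hva, hvb, hvc, hab, hac, hbc⟩
  obtain ⟨K1, K2, hK1, hK2, hN⟩ := h v
  have key : ∀ K : Set V, G.IsStrongClique K → ∀ x y, x ∈ K → y ∈ K →
      G.AntiAdj x y → False := by
    intro K hK x y hx hy hxy
    have h1 : G.θ x y = 1 := hK hx hy hxy.1
    rcases hxy.2 with h2 | h2 <;> omega
  have ha : a ∈ K1 ∪ K2 := by rw [← hN]; exact hva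
  have hb : b ∈ K1 ∪ K2 := by rw [← hN]; exact hvb
  have hc : c ∈ K1 ∪ K2 := by rw [← hN]; exact hvc
  rcases ha with h1 | h1 <;> rcases hb with h2 | h2 <;> rcases hc with h3 | h3 <;>
    first
      | exact key K1 hK1 _ _ h1 h2 hab
      | exact key K1 hK1 _ _ h1 h3 hac
      | exact key K1 hK1 _ _ h2 h3 hbc
      | exact key K2 hK2 _ _ h1 h2 hab
      | exact key K2 hK2 _ _ h1 h3 hac
      | exact key K2 hK2 _ _ h2 h3 hbc

lemma aux_outside_complete (G : Trigraph V) (hconn : G.Connected)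
    (hcf : G.ClawFree) {X : Set V} (hhom : G.HomogeneousSet X)
    {a b : V} (ha : a ∈ X) (hb : b ∈ X) (hab : G.AntiAdj a b) :
    ∀ v ∉ X, G.StronglyComplete {v} X := by
  intro v hv
  rcases hhom.2.2 v hv with h | h
  · exact h
  · exfalso
    set N : Set V := {w | w ∉ X ∧ G.StronglyAnticomplete {w} X} with hNdef
    have hvN : v ∈ N := ⟨hv, h⟩
    have step : ∀ w w', w ∈ N → G.Adj w w' → w' ∈ N := by
      intro w w' hw hadj
      by_cases hw'X : w' ∈ X
      · exfalso
        have h1 : G.θ w w' = -1 := hw.2 w rfl w' hw'X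
        rcases hadj.2 with h2 | h2 <;> omega
      · rcases hhom.2.2 w' hw'X with hc | hn
        · exfalso
          -- claw at w' with a, b, w
          refine hcf ⟨w', a, b, w, ?_, ?_, ?_, hab, ?_, ?_⟩
          · exact ⟨fun hh => hw'X (hh ▸ ha), Or.inl (hc w' rfl a ha)⟩
          · exact ⟨fun hh => hw'X (hh ▸ hb), Or.inl (hc w' rfl b hb)⟩
          · refine ⟨Ne.symm hadj.1, ?_⟩
            rw [G.symm]; exact hadj.2
          · refine ⟨fun hh => hw.1 (hh ▸ ha), Or.inr ?_⟩
            have := hw.2 w rfl a ha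
            rw [G.symm]; exact this
          · refine ⟨fun hh => hw.1 (hh ▸ hb), Or.inr ?_⟩
            have := hw.2 w rfl b hb
            rw [G.symm]; exact this
        · exact ⟨hw'X, hn⟩
    have hreach : ∀ w, Relation.ReflTransGen G.Adj v w → w ∈ N := by
      intro w hw
      induction hw with
      | refl => exact hvN
      | tail _ hadj ih => exact step _ _ ih hadj
    exact (hreach a (hconn v a)).1 ha

end Aux
/-- No connected non-degenerate trigraph contains a homogeneous set that is
not a strong clique. -/
theorem no_homogeneous_set_nonclique {V : Type} [Fintype V] (G : Trigraph V)
    (hconn : G.Connected) (hnd : G.NonDegenerate) :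
    ∀ X : Set V, G.HomogeneousSet X → G.IsStrongClique X := by
  intro X hhom
  by_contra hnc
  rw [Trigraph.IsStrongClique, Set.Pairwise] at hnc
  push_neg at hnc
  obtain ⟨a, ha, b, hb, hne, hnab⟩ := hnc
  have hab : G.AntiAdj a b := by
    refine ⟨hne, ?_⟩
    rcases G.range_mem a b with h | h | h
    · exact absurd h hnab
    · exact Or.inl h
    · exact Or.inr h
  have hcf : G.ClawFree := by
    rcases hnd with ⟨hql, _⟩ | ⟨h, _⟩
    · exact aux_quasiline_clawfree G hql
    · exact h
  have hC := aux_outside_complete G hconn hcf hhom ha hb hab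
  obtain ⟨u, hu⟩ := (Set.ne_univ_iff_exists_notMem X).mp hhom.2.1
  rcases hnd with ⟨hql, hncb⟩ | ⟨_, S, hS, hS3⟩
  · -- quasi-line case: build a cobipartition
    obtain ⟨K1, K2, hK1, hK2, hKN⟩ := hql u
    obtain ⟨L1, L2, hL1, hL2, hLN⟩ := hql a
    apply hncb
    have cross : ∀ x ∈ X, ∀ w ∉ X, G.StrongAdj x w := by
      intro x hx w hw
      exact aux_strongAdj_symm G (hC w hw w rfl x hx)
    refine ⟨(K1 ∩ X) ∪ (L1 ∩ Xᶜ), (K2 ∩ X) ∪ (L2 ∩ Xᶜ), ?_, ?_, ?_⟩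
    · intro p hp q hq hpq
      rcases hp with hp | hp <;> rcases hq with hq | hq
      · exact hK1 hp.1 hq.1 hpq
      · exact cross p hp.2 q hq.2
      · exact aux_strongAdj_symm G (cross q hq.2 p hp.2)
      · exact hL1 hp.1 hq.1 hpq
    · intro p hp q hq hpq
      rcases hp with hp | hp <;> rcases hq with hq | hq
      · exact hK2 hp.1 hq.1 hpq
      · exact cross p hp.2 q hq.2
      · exact aux_strongAdj_symm G (cross q hq.2 p hp.2)
      · exact hL2 hp.1 hq.1 hpq
    · apply Set.eq_univ_of_forall
      intro z
      by_cases hz : z ∈ X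
      · have hzu : z ∈ G.neighborhood u := by
          refine ⟨fun hh => hu (hh ▸ hz), Or.inl ?_⟩
          exact aux_strongAdj_symm G (cross z hz u hu)
        rw [hKN] at hzu
        rcases hzu with hh | hh
        · exact Or.inl (Or.inl ⟨hh, hz⟩)
        · exact Or.inr (Or.inl ⟨hh, hz⟩)
      · have hza : z ∈ G.neighborhood a := by
          refine ⟨fun hh => hz (hh ▸ ha), Or.inl ?_⟩
          exact aux_strongAdj_symm G (hC z hz z rfl a ha)
        rw [hLN] at hza
        rcases hza with hh | hh
        · exact Or.inl (Or.inr ⟨hh, hz⟩)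
        · exact Or.inr (Or.inr ⟨hh, hz⟩)
  · -- claw-free case with a stable set of size ≥ 3
    have hfin : S.Finite := Set.toFinite S
    obtain ⟨s1, hs1, s2, hs2, s3, hs3, h12, h13, h23⟩ :
        ∃ x ∈ S, ∃ y ∈ S, ∃ z ∈ S, x ≠ y ∧ x ≠ z ∧ y ≠ z := by
      have h2 : 2 < S.ncard := hS3
      rwa [Set.two_lt_ncard hfin] at h2
    have hA12 : G.AntiAdj s1 s2 := hS hs1 hs2 h12
    have hA13 : G.AntiAdj s1 s3 := hS hs1 hs3 h13
    have hA23 : G.AntiAdj s2 s3 := hS hs2 hs3 h23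
    have hmem : ∀ s t : V, G.AntiAdj s t → s ∈ X → t ∈ X := by
      intro s t hst hsX
      by_contra htX
      have h1 : G.θ t s = 1 := hC t htX t rfl s hsX
      have h2 : G.θ s t = 1 := by rw [G.symm]; exact h1
      rcases hst.2 with h3 | h3 <;> omega
    by_cases h1X : s1 ∈ X
    · have h2X : s2 ∈ X := hmem s1 s2 hA12 h1X
      have h3X : s3 ∈ X := hmem s1 s3 hA13 h1X
      refine hcf ⟨u, s1, s2, s3, ?_, ?_, ?_, hA12, hA13, hA23⟩
      · exact ⟨fun hh => hu (hh ▸ h1X), Or.inl (hC u hu u rfl s1 h1X)⟩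
      · exact ⟨fun hh => hu (hh ▸ h2X), Or.inl (hC u hu u rfl s2 h2X)⟩
      · exact ⟨fun hh => hu (hh ▸ h3X), Or.inl (hC u hu u rfl s3 h3X)⟩
    · have h2X : s2 ∉ X := fun hh => h1X (hmem s2 s1 ⟨Ne.symm h12, by
        rw [G.symm]; exact hA12.2⟩ hh)
      have h3X : s3 ∉ X := fun hh => h1X (hmem s3 s1 ⟨Ne.symm h13, by
        rw [G.symm]; exact hA13.2⟩ hh)
      refine hcf ⟨a, s1, s2, s3, ?_, ?_, ?_, hA12, hA13, hA23⟩
      · exact ⟨fun hh => h1X (hh ▸ ha), Or.inl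
          (aux_strongAdj_symm G (hC s1 h1X s1 rfl a ha))⟩
      · exact ⟨fun hh => h2X (hh ▸ ha), Or.inl
          (aux_strongAdj_symm G (hC s2 h2X s2 rfl a ha))⟩
      · exact ⟨fun hh => h3X (hh ▸ ha), Or.inl
          (aux_strongAdj_symm G (hC s3 h3X s3 rfl a ha))⟩
end

section
/- Suppose G is a trigraph containing two deletion-minimal homogeneous pairs of strong cliques (A1, B1) and (A2, B2) with skew intersection. Then A1 ∪ B1 ∪ A2 ∪ B2 is the union of two strong cliques, and A1 ∪ B1 ∪ A2 ∪ B2 is either a homogeneous set of G or equals V(G). -/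
section Aux

open Trigraph

variable {V : Type}

lemma aux_dm_symm (G : Trigraph V) {A B : Set V} (h : G.DeletionMinimal A B) :
    G.DeletionMinimal B A := by
  obtain ⟨⟨hane, hbne, hdis, hKA, hKB, hsing, hout⟩, hsq, hA, hB⟩ := h
  refine ⟨⟨hbne, hane, hdis.symm, hKB, hKA, ?_, ?_⟩, ?_, hB, hA⟩
  · rintro ⟨b, a, hb, ha⟩; exact hsing ⟨a, b, ha, hb⟩
  · intro v hv
    have hv' : v ∉ A ∪ B := by rwa [Set.union_comm]
    exact (hout v hv').symm
  · rwa [Set.union_comm]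

lemma aux_not_sc (G : Trigraph V) {x : V} {Y : Set V}
    (h : ¬ G.StronglyComplete {x} Y) : ∃ c ∈ Y, G.θ x c ≠ 1 := by
  by_contra hc
  push_neg at hc
  exact h fun u hu w hw => by
    rw [Set.mem_singleton_iff] at hu; subst hu; exact hc w hw

lemma aux_corners (G : Trigraph V) {A1 B1 A2 B2 : Set V}
    (h1 : G.DeletionMinimal A1 B1) (h2 : G.DeletionMinimal A2 B2)
    (hA : (A1 ∩ A2).Nonempty) (hB : (A1 ∩ B2).Nonempty) :
    (B1 ∩ A2).Nonempty ∧ (B1 ∩ B2).Nonempty := by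
  obtain ⟨⟨_, _, hdis1, hK1A, hK1B, _, hout1⟩, _, _, _⟩ := h1
  obtain ⟨⟨_, _, hdis2, hK2A, hK2B, _, _⟩, _, h2a, h2b⟩ := h2
  obtain ⟨x, hxA1, hxA2⟩ := hA
  obtain ⟨y, hyA1, hyB2⟩ := hB
  have hxy : x ≠ y := fun h => Set.disjoint_left.mp hdis2 hxA2 (h ▸ hyB2)
  have hθxy : G.θ x y = 1 := hK1A hxA1 hyA1 hxy
  constructor
  · -- find d ∈ B1 ∩ A2 using y ∈ B2 not strongly complete to A2
    obtain ⟨d, hdA2, hd⟩ := aux_not_sc G (h2b y hyB2).1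
    have hdy : d ≠ y := fun h => Set.disjoint_left.mp hdis2 (h ▸ hdA2) hyB2
    have hdA1 : d ∉ A1 := fun hdA1 => hd (hK1A hyA1 hdA1 hdy.symm)
    have hdP : d ∈ A1 ∪ B1 := by
      by_contra hdP
      have hdx : d ≠ x := by
        intro h; subst h
        exact hd (by rw [G.symm]; exact hθxy)
      have hθdx : G.θ d x = 1 := hK2A hdA2 hxA2 hdx
      rcases (hout1 d hdP).1 with h | h
      · have h5 : G.θ d y = 1 := h d rfl y hyA1
        exact hd (by rw [G.symm]; exact h5)
      · have h5 : G.θ d x = -1 := h d rfl x hxA1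
        rw [hθdx] at h5; exact absurd h5 (by norm_num)
    rcases hdP with h | h
    · exact absurd h hdA1
    · exact ⟨d, h, hdA2⟩
  · -- find c ∈ B1 ∩ B2 using x ∈ A2 not strongly complete to B2
    obtain ⟨c, hcB2, hc⟩ := aux_not_sc G (h2a x hxA2).1
    have hcx : c ≠ x := fun h => Set.disjoint_left.mp hdis2 hxA2 (h ▸ hcB2)
    have hcA1 : c ∉ A1 := fun hcA1 => hc (hK1A hxA1 hcA1 hcx.symm)
    have hcP : c ∈ A1 ∪ B1 := by
      by_contra hcP
      have hcy : c ≠ y := by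
        intro h; subst h; exact hc hθxy
      have hθcy : G.θ c y = 1 := hK2B hcB2 hyB2 hcy
      rcases (hout1 c hcP).1 with h | h
      · have h5 : G.θ c x = 1 := h c rfl x hxA1
        exact hc (by rw [G.symm]; exact h5)
      · have h5 : G.θ c y = -1 := h c rfl y hyA1
        rw [hθcy] at h5; exact absurd h5 (by norm_num)
    rcases hcP with h | h
    · exact absurd h hcA1
    · exact ⟨c, h, hcB2⟩

lemma aux_main [Fintype V] (G : Trigraph V) {A1 B1 A2 B2 : Set V}
    (h1 : G.DeletionMinimal A1 B1) (h2 : G.DeletionMinimal A2 B2)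
    (c1 : (A1 ∩ A2).Nonempty) (c2 : (A1 ∩ B2).Nonempty)
    (c3 : (B1 ∩ A2).Nonempty) (c4 : (B1 ∩ B2).Nonempty) :
    (∃ K1 K2 : Set V, G.IsStrongClique K1 ∧ G.IsStrongClique K2 ∧
      A1 ∪ B1 ∪ A2 ∪ B2 = K1 ∪ K2) ∧
    (G.HomogeneousSet (A1 ∪ B1 ∪ A2 ∪ B2) ∨ A1 ∪ B1 ∪ A2 ∪ B2 = Set.univ) := by
  obtain ⟨⟨_, _, hdis1, hK1A, hK1B, _, hout1⟩, _, _, _⟩ := h1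
  obtain ⟨⟨_, _, hdis2, hK2A, hK2B, _, hout2⟩, _, _, _⟩ := h2
  obtain ⟨x, hxA1, hxA2⟩ := c1
  obtain ⟨y, hyA1, hyB2⟩ := c2
  obtain ⟨d, hdB1, hdA2⟩ := c3
  obtain ⟨z, hzB1, hzB2⟩ := c4
  -- vertices of A2 outside A1 ∪ B1 are strongly complete to A1
  have hA2P : ∀ u ∈ A2, u ∉ A1 ∪ B1 → ∀ a ∈ A1, G.θ u a = 1 := by
    intro u hu hup
    rcases (hout1 u hup).1 with h | h
    · exact fun a ha => h u rfl a ha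
    · exfalso
      have hne : x ≠ u := fun he => hup (Or.inl (he ▸ hxA1))
      have h3 : G.θ x u = 1 := hK2A hxA2 hu hne
      have h4 : G.θ u x = -1 := h u rfl x hxA1
      rw [G.symm, h3] at h4
      exact absurd h4 (by norm_num)
  -- vertices of B2 outside A1 ∪ B1 are strongly complete to B1
  have hB2P : ∀ w ∈ B2, w ∉ A1 ∪ B1 → ∀ b ∈ B1, G.θ w b = 1 := by
    intro w hw hwp
    rcases (hout1 w hwp).2 with h | h
    · exact fun b hb => h w rfl b hb
    · exfalso
      have hne : z ≠ w := fun he => hwp (Or.inr (he ▸ hzB1))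
      have h3 : G.θ z w = 1 := hK2B hzB2 hw hne
      have h4 : G.θ w z = -1 := h w rfl z hzB1
      rw [G.symm, h3] at h4
      exact absurd h4 (by norm_num)
  constructor
  · refine ⟨A1 ∪ (A2 \ (A1 ∪ B1)), B1 ∪ (B2 \ (A1 ∪ B1)), ?_, ?_, ?_⟩
    · intro p hp q hq hpq
      rcases hp with hp | ⟨hp, hp'⟩ <;> rcases hq with hq | ⟨hq, hq'⟩
      · exact hK1A hp hq hpq
      · show G.θ p q = 1
        rw [G.symm]; exact hA2P q hq hq' p hp
      · exact hA2P p hp hp' q hq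
      · exact hK2A hp hq hpq
    · intro p hp q hq hpq
      rcases hp with hp | ⟨hp, hp'⟩ <;> rcases hq with hq | ⟨hq, hq'⟩
      · exact hK1B hp hq hpq
      · show G.θ p q = 1
        rw [G.symm]; exact hB2P q hq hq' p hp
      · exact hB2P p hp hp' q hq
      · exact hK2B hp hq hpq
    · ext v
      simp only [Set.mem_union, Set.mem_diff]
      tauto
  · by_cases hX : A1 ∪ B1 ∪ A2 ∪ B2 = Set.univ
    · exact Or.inr hX
    · left
      refine ⟨?_, hX, ?_⟩
      · have hxz : x ≠ z := fun h =>
          Set.disjoint_left.mp hdis1 hxA1 (h ▸ hzB1)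
        have hsub : ({x, z} : Set V) ⊆ A1 ∪ B1 ∪ A2 ∪ B2 := by
          intro p hp
          rcases hp with rfl | hp
          · exact Or.inl (Or.inl (Or.inl hxA1))
          · rw [Set.mem_singleton_iff] at hp; subst hp
            exact Or.inl (Or.inl (Or.inr hzB1))
        calc 2 = ({x, z} : Set V).ncard := (Set.ncard_pair hxz).symm
          _ ≤ _ := Set.ncard_le_ncard hsub (Set.toFinite _)
      · intro v hv
        have hvP : v ∉ A1 ∪ B1 := fun h => hv (Or.inl (Or.inl h))
        have hvQ : v ∉ A2 ∪ B2 := fun h => by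
          rcases h with h | h
          · exact hv (Or.inl (Or.inr h))
          · exact hv (Or.inr h)
        obtain ⟨h1A, h1B⟩ := hout1 v hvP
        obtain ⟨h2A, h2B⟩ := hout2 v hvQ
        rcases h1A with hsc | hsa
        · left
          have hvx : G.θ v x = 1 := hsc v rfl x hxA1
          have hvy : G.θ v y = 1 := hsc v rfl y hyA1
          have h2A' : ∀ w ∈ A2, G.θ v w = 1 := by
            rcases h2A with h | h
            · exact fun w hw => h v rfl w hw
            · have h5 : G.θ v x = -1 := h v rfl x hxA2
              rw [hvx] at h5; exact absurd h5 (by norm_num)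
          have h2B' : ∀ w ∈ B2, G.θ v w = 1 := by
            rcases h2B with h | h
            · exact fun w hw => h v rfl w hw
            · have h5 : G.θ v y = -1 := h v rfl y hyB2
              rw [hvy] at h5; exact absurd h5 (by norm_num)
          have h1B' : ∀ w ∈ B1, G.θ v w = 1 := by
            rcases h1B with h | h
            · exact fun w hw => h v rfl w hw
            · have h5 : G.θ v d = -1 := h v rfl d hdB1
              rw [h2A' d hdA2] at h5; exact absurd h5 (by norm_num)
          intro p hp w hw
          rw [Set.mem_singleton_iff] at hp; subst hp
          rcases hw with ((hw | hw) | hw) | hw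
          · exact hsc p rfl w hw
          · exact h1B' w hw
          · exact h2A' w hw
          · exact h2B' w hw
        · right
          have hvx : G.θ v x = -1 := hsa v rfl x hxA1
          have hvy : G.θ v y = -1 := hsa v rfl y hyA1
          have h2A' : ∀ w ∈ A2, G.θ v w = -1 := by
            rcases h2A with h | h
            · have h5 : G.θ v x = 1 := h v rfl x hxA2
              rw [hvx] at h5; exact absurd h5 (by norm_num)
            · exact fun w hw => h v rfl w hw
          have h2B' : ∀ w ∈ B2, G.θ v w = -1 := by
            rcases h2B with h | h
            · have h5 : G.θ v y = 1 := h v rfl y hyB2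
              rw [hvy] at h5; exact absurd h5 (by norm_num)
            · exact fun w hw => h v rfl w hw
          have h1B' : ∀ w ∈ B1, G.θ v w = -1 := by
            rcases h1B with h | h
            · have h5 : G.θ v d = 1 := h v rfl d hdB1
              rw [h2A' d hdA2] at h5; exact absurd h5 (by norm_num)
            · exact fun w hw => h v rfl w hw
          intro p hp w hw
          rw [Set.mem_singleton_iff] at hp; subst hp
          rcases hw with ((hw | hw) | hw) | hw
          · exact hsa p rfl w hw
          · exact h1B' w hw
          · exact h2A' w hw
          · exact h2B' w hw

lemma aux_inter_comm_ne {A B : Set V} (h : (A ∩ B).Nonempty) : (B ∩ A).Nonempty := by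
  obtain ⟨x, h1, h2⟩ := h; exact ⟨x, h2, h1⟩

end Aux

/-- If a trigraph contains two deletion-minimal homogeneous pairs of strong
cliques with skew intersection, then the union of the four parts is the union of two
strong cliques, and it is either a homogeneous set or the entire vertex set. -/
theorem skew_intersection_structure {V : Type} [Fintype V] (G : Trigraph V)
    (A1 B1 A2 B2 : Set V)
    (h1 : G.DeletionMinimal A1 B1) (h2 : G.DeletionMinimal A2 B2)
    (hskew : Trigraph.SkewIntersection A1 B1 A2 B2) :
    (∃ K1 K2 : Set V, G.IsStrongClique K1 ∧ G.IsStrongClique K2 ∧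
      A1 ∪ B1 ∪ A2 ∪ B2 = K1 ∪ K2) ∧
    (G.HomogeneousSet (A1 ∪ B1 ∪ A2 ∪ B2) ∨ A1 ∪ B1 ∪ A2 ∪ B2 = Set.univ) := by
  rcases hskew with ⟨hA, hB⟩ | ⟨hA, hB⟩ | ⟨hA, hB⟩ | ⟨hA, hB⟩
  · obtain ⟨c3, c4⟩ := aux_corners G h1 h2 hA hB
    exact aux_main G h1 h2 hA hB c3 c4
  · obtain ⟨c1, c2⟩ := aux_corners G (aux_dm_symm G h1) h2 hA hB
    exact aux_main G h1 h2 c1 c2 hA hB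
  · obtain ⟨c2, c4⟩ := aux_corners G h2 h1 hA hB
    exact aux_main G h1 h2 (aux_inter_comm_ne hA) (aux_inter_comm_ne c2)
      (aux_inter_comm_ne hB) (aux_inter_comm_ne c4)
  · obtain ⟨c1, c3⟩ := aux_corners G (aux_dm_symm G h2) h1 hA hB
    exact aux_main G h1 h2 (aux_inter_comm_ne c1) (aux_inter_comm_ne hA)
      (aux_inter_comm_ne c3) (aux_inter_comm_ne hB)
end

section
/- Suppose G is a connected claw-free trigraph containing two deletion-minimal homogeneous pairs of strong cliques (A1, B1) and (A2, B2) with skew intersection. Then G is degenerate (i.e., G is not non-degenerate). -/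
namespace Trigraph

lemma Adj.symm'' {V : Type} {G : Trigraph V} {u v : V} (h : G.Adj u v) : G.Adj v u :=
  ⟨h.1.symm, by rw [G.symm v u]; exact h.2⟩

lemma AntiAdj.symm'' {V : Type} {G : Trigraph V} {u v : V} (h : G.AntiAdj u v) :
    G.AntiAdj v u :=
  ⟨h.1.symm, by rw [G.symm v u]; exact h.2⟩

lemma AntiAdj.ne_one' {V : Type} {G : Trigraph V} {u v : V} (h : G.AntiAdj u v) :
    G.θ u v ≠ 1 := by
  rcases h.2 with h' | h' <;> omega

lemma antiAdj_of_ne_one {V : Type} {G : Trigraph V} {u v : V} (hne : u ≠ v)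
    (h : G.θ u v ≠ 1) : G.AntiAdj u v := by
  rcases G.range_mem u v with h1 | h1 | h1
  · exact absurd h1 h
  · exact ⟨hne, Or.inl h1⟩
  · exact ⟨hne, Or.inr h1⟩

lemma DeletionMinimal.symm'' {V : Type} {G : Trigraph V} {A B : Set V}
    (h : G.DeletionMinimal A B) : G.DeletionMinimal B A := by
  obtain ⟨⟨hA, hB, hd, hca, hcb, hns, hhom⟩, hsq, h1, h2⟩ := h
  refine ⟨⟨hB, hA, hd.symm, hcb, hca, ?_, ?_⟩, ?_, h2, h1⟩
  · rintro ⟨a, b, ha, hb⟩; exact hns ⟨b, a, hb, ha⟩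
  · intro v hv
    rw [Set.union_comm] at hv
    exact ⟨(hhom v hv).2, (hhom v hv).1⟩
  · rwa [Set.union_comm]

lemma not_scomp_single {V : Type} {G : Trigraph V} {v : V} {X : Set V}
    (h : ¬ G.StronglyComplete {v} X) : ∃ u ∈ X, G.θ v u ≠ 1 := by
  by_contra hc; push_neg at hc
  exact h fun a ha u hu => by
    rw [Set.mem_singleton_iff] at ha; subst ha; exact hc u hu

end Trigraph

namespace Trigraph

lemma skew_main {V : Type} [Fintype V] (G : Trigraph V)
    (hconn : G.Connected) (hcf : G.ClawFree) (A B C D : Set V)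
    (hAB : G.DeletionMinimal A B) (hCD : G.DeletionMinimal C D)
    {x y : V} (hxA : x ∈ A) (hxC : x ∈ C) (hyA : y ∈ A) (hyD : y ∈ D) :
    ¬ G.NonDegenerate := by
  obtain ⟨⟨hAne, hBne, hABd, hAcl, hBcl, -, hhomAB⟩, -, hAmin, hBmin⟩ := hAB
  obtain ⟨⟨hCne, hDne, hCDd, hCcl, hDcl, -, hhomCD⟩, -, hCmin, hDmin⟩ := hCD
  have neAB : ∀ u v : V, u ∈ A → v ∈ B → u ≠ v := by
    intro u v hu hv h; subst h; exact Set.disjoint_left.mp hABd hu hv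
  have neCD : ∀ u v : V, u ∈ C → v ∈ D → u ≠ v := by
    intro u v hu hv h; subst h; exact Set.disjoint_left.mp hCDd hu hv
  -- the vertex bD ∈ B ∩ D with x, bD antiadjacent
  obtain ⟨bD, hbDD, hxbD⟩ := not_scomp_single (hCmin x hxC).1
  have hbDB : bD ∈ B := by
    have hbDA : bD ∉ A := fun hA' => hxbD (hAcl hxA hA' (neCD x bD hxC hbDD))
    by_contra hbDB
    have hout : bD ∉ A ∪ B := fun h => h.elim hbDA hbDB
    rcases (hhomAB bD hout).1 with hc | ha
    · exact hxbD ((G.symm x bD).trans (hc bD rfl x hxA))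
    · have h1 : G.θ bD y = -1 := ha bD rfl y hyA
      have h2 : G.θ bD y = 1 := hDcl hbDD hyD fun h => hbDA (h ▸ hyA)
      omega
  -- the vertex bC ∈ B ∩ C with y, bC antiadjacent
  obtain ⟨bC, hbCC, hybC⟩ := not_scomp_single (hDmin y hyD).1
  have hbCB : bC ∈ B := by
    have hbCA : bC ∉ A := fun hA' => hybC (hAcl hyA hA' (neCD bC y hbCC hyD).symm)
    by_contra hbCB
    have hout : bC ∉ A ∪ B := fun h => h.elim hbCA hbCB
    rcases (hhomAB bC hout).1 with hc | ha
    · exact hybC ((G.symm y bC).trans (hc bC rfl y hyA))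
    · have h1 : G.θ bC x = -1 := ha bC rfl x hxA
      have h2 : G.θ bC x = 1 := hCcl hbCC hxC fun h => hbCA (h ▸ hxA)
      omega
  have haxbD : G.AntiAdj x bD := antiAdj_of_ne_one (neAB x bD hxA hbDB) hxbD
  have haybC : G.AntiAdj y bC := antiAdj_of_ne_one (neAB y bC hyA hbCB) hybC
  -- vertices of C (resp. D) outside A ∪ B are strongly complete to A and to B
  have hCout : ∀ v ∈ C, v ∉ A → v ∉ B →
      (∀ a ∈ A, G.θ v a = 1) ∧ (∀ b ∈ B, G.θ v b = 1) := by
    intro v hvC hvA hvB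
    have hout : v ∉ A ∪ B := fun h => h.elim hvA hvB
    obtain ⟨hA', hB'⟩ := hhomAB v hout
    constructor
    · rcases hA' with hc | ha
      · exact fun a haA => hc v rfl a haA
      · intro a haA; exfalso
        have h1 : G.θ v x = -1 := ha v rfl x hxA
        have h2 : G.θ v x = 1 := hCcl hvC hxC fun h => hvA (h ▸ hxA)
        omega
    · rcases hB' with hc | ha
      · exact fun b hbB => hc v rfl b hbB
      · intro b hbB; exfalso
        have h1 : G.θ v bC = -1 := ha v rfl bC hbCB
        have h2 : G.θ v bC = 1 := hCcl hvC hbCC fun h => hvB (h ▸ hbCB)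
        omega
  have hDout : ∀ v ∈ D, v ∉ A → v ∉ B →
      (∀ a ∈ A, G.θ v a = 1) ∧ (∀ b ∈ B, G.θ v b = 1) := by
    intro v hvD hvA hvB
    have hout : v ∉ A ∪ B := fun h => h.elim hvA hvB
    obtain ⟨hA', hB'⟩ := hhomAB v hout
    constructor
    · rcases hA' with hc | ha
      · exact fun a haA => hc v rfl a haA
      · intro a haA; exfalso
        have h1 : G.θ v y = -1 := ha v rfl y hyA
        have h2 : G.θ v y = 1 := hDcl hvD hyD fun h => hvA (h ▸ hyA)
        omega
    · rcases hB' with hc | ha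
      · exact fun b hbB => hc v rfl b hbB
      · intro b hbB; exfalso
        have h1 : G.θ v bD = -1 := ha v rfl bD hbDB
        have h2 : G.θ v bD = 1 := hDcl hvD hbDD fun h => hvB (h ▸ hbDB)
        omega
  -- dichotomy for vertices outside A ∪ B ∪ C ∪ D
  have hZdich : ∀ v, ¬(v ∈ A ∨ v ∈ B ∨ v ∈ C ∨ v ∈ D) →
      (∀ u, (u ∈ A ∨ u ∈ B ∨ u ∈ C ∨ u ∈ D) → G.θ v u = 1) ∨
      (∀ u, (u ∈ A ∨ u ∈ B ∨ u ∈ C ∨ u ∈ D) → G.θ v u = -1) := by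
    intro v hv
    have hoAB : v ∉ A ∪ B := fun h => h.elim (fun h' => hv (Or.inl h'))
      (fun h' => hv (Or.inr (Or.inl h')))
    have hoCD : v ∉ C ∪ D := fun h => h.elim (fun h' => hv (Or.inr (Or.inr (Or.inl h'))))
      (fun h' => hv (Or.inr (Or.inr (Or.inr h'))))
    obtain ⟨rA, rB⟩ := hhomAB v hoAB
    obtain ⟨rC, rD⟩ := hhomCD v hoCD
    rcases rA with rA | rA
    · left
      have hA' : ∀ u ∈ A, G.θ v u = 1 := fun u hu => rA v rfl u hu
      have hC' : ∀ u ∈ C, G.θ v u = 1 := by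
        rcases rC with rC | rC
        · exact fun u hu => rC v rfl u hu
        · intro u hu; exfalso
          have h1 : G.θ v x = -1 := rC v rfl x hxC
          have h2 := hA' x hxA
          omega
      have hB' : ∀ u ∈ B, G.θ v u = 1 := by
        rcases rB with rB | rB
        · exact fun u hu => rB v rfl u hu
        · intro u hu; exfalso
          have h1 : G.θ v bC = -1 := rB v rfl bC hbCB
          have h2 := hC' bC hbCC
          omega
      have hD' : ∀ u ∈ D, G.θ v u = 1 := by
        rcases rD with rD | rD
        · exact fun u hu => rD v rfl u hu
        · intro u hu; exfalso
          have h1 : G.θ v y = -1 := rD v rfl y hyD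
          have h2 := hA' y hyA
          omega
      rintro u (h | h | h | h)
      exacts [hA' u h, hB' u h, hC' u h, hD' u h]
    · right
      have hA' : ∀ u ∈ A, G.θ v u = -1 := fun u hu => rA v rfl u hu
      have hC' : ∀ u ∈ C, G.θ v u = -1 := by
        rcases rC with rC | rC
        · intro u hu; exfalso
          have h1 : G.θ v x = 1 := rC v rfl x hxC
          have h2 := hA' x hxA
          omega
        · exact fun u hu => rC v rfl u hu
      have hB' : ∀ u ∈ B, G.θ v u = -1 := by
        rcases rB with rB | rB
        · intro u hu; exfalso
          have h1 : G.θ v bC = 1 := rB v rfl bC hbCB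
          have h2 := hC' bC hbCC
          omega
        · exact fun u hu => rB v rfl u hu
      have hD' : ∀ u ∈ D, G.θ v u = -1 := by
        rcases rD with rD | rD
        · intro u hu; exfalso
          have h1 : G.θ v y = 1 := rD v rfl y hyD
          have h2 := hA' y hyA
          omega
        · exact fun u hu => rD v rfl u hu
      rintro u (h | h | h | h)
      exacts [hA' u h, hB' u h, hC' u h, hD' u h]
  -- by connectivity and claw-freeness, every outside vertex is strongly complete
  have hZ : ∀ v, ¬(v ∈ A ∨ v ∈ B ∨ v ∈ C ∨ v ∈ D) →
      ∀ u, (u ∈ A ∨ u ∈ B ∨ u ∈ C ∨ u ∈ D) → G.θ v u = 1 := by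
    have hstep : ∀ u u',
        (¬(u ∈ A ∨ u ∈ B ∨ u ∈ C ∨ u ∈ D) ∧
          ∀ w, (w ∈ A ∨ w ∈ B ∨ w ∈ C ∨ w ∈ D) → G.θ u w = -1) → G.Adj u u' →
        (¬(u' ∈ A ∨ u' ∈ B ∨ u' ∈ C ∨ u' ∈ D) ∧
          ∀ w, (w ∈ A ∨ w ∈ B ∨ w ∈ C ∨ w ∈ D) → G.θ u' w = -1) := by
      rintro u u' ⟨hu1, hu2⟩ hadj
      have hu'U : ¬(u' ∈ A ∨ u' ∈ B ∨ u' ∈ C ∨ u' ∈ D) := by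
        intro h
        have h1 := hu2 u' h
        rcases hadj.2 with h' | h' <;> omega
      refine ⟨hu'U, ?_⟩
      rcases hZdich u' hu'U with hcomp | hanti
      · exfalso
        refine hcf ⟨u', u, x, bD, hadj.symm'', ?_, ?_, ?_, ?_, haxbD⟩
        · exact ⟨fun h => hu'U (by rw [h]; exact Or.inl hxA),
            Or.inl (hcomp x (Or.inl hxA))⟩
        · exact ⟨fun h => hu'U (by rw [h]; exact Or.inr (Or.inl hbDB)),
            Or.inl (hcomp bD (Or.inr (Or.inl hbDB)))⟩
        · exact ⟨fun h => hu1 (by rw [h]; exact Or.inl hxA),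
            Or.inr (hu2 x (Or.inl hxA))⟩
        · exact ⟨fun h => hu1 (by rw [h]; exact Or.inr (Or.inl hbDB)),
            Or.inr (hu2 bD (Or.inr (Or.inl hbDB)))⟩
      · exact hanti
    intro v hv
    rcases hZdich v hv with h | h
    · exact h
    · exfalso
      have carry : ∀ w, Relation.ReflTransGen G.Adj v w →
          (¬(w ∈ A ∨ w ∈ B ∨ w ∈ C ∨ w ∈ D) ∧
            ∀ u, (u ∈ A ∨ u ∈ B ∨ u ∈ C ∨ u ∈ D) → G.θ w u = -1) := by
        intro w hw
        induction hw with
        | refl => exact ⟨hv, h⟩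
        | tail _ hadj ih => exact hstep _ _ ih hadj
      exact (carry x (hconn v x)).1 (Or.inl hxA)
  -- pigeonhole: no three pairwise antiadjacent vertices in a union of two strong cliques
  have pig : ∀ (K L : Set V), G.IsStrongClique K → G.IsStrongClique L →
      ∀ u v w, (u ∈ K ∨ u ∈ L) → (v ∈ K ∨ v ∈ L) → (w ∈ K ∨ w ∈ L) →
      G.AntiAdj u v → G.AntiAdj u w → G.AntiAdj v w → False := by
    intro K L hK hL u v w hu hv hw auv auw avw
    have bad : ∀ (M : Set V), G.IsStrongClique M → ∀ p q, p ∈ M → q ∈ M →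
        G.AntiAdj p q → False := fun M hM p q hp hq h => h.ne_one' (hM hp hq h.1)
    rcases hu with hu | hu <;> rcases hv with hv | hv <;> rcases hw with hw | hw
    exacts [bad K hK u v hu hv auv, bad K hK u v hu hv auv, bad K hK u w hu hw auw,
      bad L hL v w hv hw avw, bad K hK v w hv hw avw, bad L hL u w hu hw auw,
      bad L hL u v hu hv auv, bad L hL u v hu hv auv]
  intro hnd
  rcases hnd with ⟨hql, hncob⟩ | ⟨-, S, hSst, hS3⟩
  · -- quasi-line case : G is cobipartite
    apply hncob
    obtain ⟨K1', K2', hK1', hK2', hN⟩ := hql x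
    refine ⟨A ∪ {v | v ∈ C ∧ v ∉ A ∧ v ∉ B} ∪
        {v | ¬(v ∈ A ∨ v ∈ B ∨ v ∈ C ∨ v ∈ D) ∧ v ∈ K1'},
      B ∪ {v | v ∈ D ∧ v ∉ A ∧ v ∉ B} ∪
        {v | ¬(v ∈ A ∨ v ∈ B ∨ v ∈ C ∨ v ∈ D) ∧ v ∈ K2'}, ?_, ?_, ?_⟩
    · rintro u ((hu | hu) | hu) v ((hv | hv) | hv) huv
      · exact hAcl hu hv huv
      · exact (G.symm u v).trans ((hCout v hv.1 hv.2.1 hv.2.2).1 u hu)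
      · exact (G.symm u v).trans (hZ v hv.1 u (Or.inl hu))
      · exact (hCout u hu.1 hu.2.1 hu.2.2).1 v hv
      · exact hCcl hu.1 hv.1 huv
      · exact (G.symm u v).trans (hZ v hv.1 u (Or.inr (Or.inr (Or.inl hu.1))))
      · exact hZ u hu.1 v (Or.inl hv)
      · exact hZ u hu.1 v (Or.inr (Or.inr (Or.inl hv.1)))
      · exact hK1' hu.2 hv.2 huv
    · rintro u ((hu | hu) | hu) v ((hv | hv) | hv) huv
      · exact hBcl hu hv huv
      · exact (G.symm u v).trans ((hDout v hv.1 hv.2.1 hv.2.2).2 u hu)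
      · exact (G.symm u v).trans (hZ v hv.1 u (Or.inr (Or.inl hu)))
      · exact (hDout u hu.1 hu.2.1 hu.2.2).2 v hv
      · exact hDcl hu.1 hv.1 huv
      · exact (G.symm u v).trans (hZ v hv.1 u (Or.inr (Or.inr (Or.inr hu.1))))
      · exact hZ u hu.1 v (Or.inr (Or.inl hv))
      · exact hZ u hu.1 v (Or.inr (Or.inr (Or.inr hv.1)))
      · exact hK2' hu.2 hv.2 huv
    · apply Set.eq_univ_iff_forall.mpr
      intro v
      by_cases hvA : v ∈ A
      · exact Or.inl (Or.inl (Or.inl hvA))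
      by_cases hvB : v ∈ B
      · exact Or.inr (Or.inl (Or.inl hvB))
      by_cases hvC : v ∈ C
      · exact Or.inl (Or.inl (Or.inr ⟨hvC, hvA, hvB⟩))
      by_cases hvD : v ∈ D
      · exact Or.inr (Or.inl (Or.inr ⟨hvD, hvA, hvB⟩))
      have hvU : ¬(v ∈ A ∨ v ∈ B ∨ v ∈ C ∨ v ∈ D) := by tauto
      have hvN : v ∈ G.neighborhood x := by
        show G.Adj x v
        exact ⟨fun h => hvA (h ▸ hxA),
          Or.inl ((G.symm x v).trans (hZ v hvU x (Or.inl hxA)))⟩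
      rw [hN] at hvN
      rcases hvN with h | h
      · exact Or.inl (Or.inr ⟨hvU, h⟩)
      · exact Or.inr (Or.inr ⟨hvU, h⟩)
  · -- stable set case : find a contradiction
    obtain ⟨T, hTS, hT3⟩ := Set.exists_subset_card_eq hS3
    rw [Set.ncard_eq_three] at hT3
    obtain ⟨s1, s2, s3, h12, h13, h23, rfl⟩ := hT3
    have hs1 : s1 ∈ S := hTS (by simp)
    have hs2 : s2 ∈ S := hTS (by simp)
    have hs3 : s3 ∈ S := hTS (by simp)
    have a12 : G.AntiAdj s1 s2 := hSst hs1 hs2 h12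
    have a13 : G.AntiAdj s1 s3 := hSst hs1 hs3 h13
    have a23 : G.AntiAdj s2 s3 := hSst hs2 hs3 h23
    have hU1 : s1 ∈ A ∨ s1 ∈ B ∨ s1 ∈ C ∨ s1 ∈ D := by
      by_contra h1
      have hU2 : ¬(s2 ∈ A ∨ s2 ∈ B ∨ s2 ∈ C ∨ s2 ∈ D) :=
        fun h2 => a12.ne_one' (hZ s1 h1 s2 h2)
      have hU3 : ¬(s3 ∈ A ∨ s3 ∈ B ∨ s3 ∈ C ∨ s3 ∈ D) :=
        fun h3 => a13.ne_one' (hZ s1 h1 s3 h3)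
      refine hcf ⟨x, s1, s2, s3, ?_, ?_, ?_, a12, a13, a23⟩
      · exact ⟨fun h => h1 (by rw [← h]; exact Or.inl hxA),
          Or.inl ((G.symm x s1).trans (hZ s1 h1 x (Or.inl hxA)))⟩
      · exact ⟨fun h => hU2 (by rw [← h]; exact Or.inl hxA),
          Or.inl ((G.symm x s2).trans (hZ s2 hU2 x (Or.inl hxA)))⟩
      · exact ⟨fun h => hU3 (by rw [← h]; exact Or.inl hxA),
          Or.inl ((G.symm x s3).trans (hZ s3 hU3 x (Or.inl hxA)))⟩
    have hU2 : s2 ∈ A ∨ s2 ∈ B ∨ s2 ∈ C ∨ s2 ∈ D := by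
      by_contra h2
      exact a12.ne_one' ((G.symm s1 s2).trans (hZ s2 h2 s1 hU1))
    have hU3 : s3 ∈ A ∨ s3 ∈ B ∨ s3 ∈ C ∨ s3 ∈ D := by
      by_contra h3
      exact a13.ne_one' ((G.symm s1 s3).trans (hZ s3 h3 s1 hU1))
    have hmem : ∀ p q r, G.AntiAdj p q → G.AntiAdj p r → G.AntiAdj q r →
        (p ∈ A ∨ p ∈ B ∨ p ∈ C ∨ p ∈ D) → (q ∈ A ∨ q ∈ B ∨ q ∈ C ∨ q ∈ D) →
        (r ∈ A ∨ r ∈ B ∨ r ∈ C ∨ r ∈ D) → p ∈ A ∨ p ∈ B := by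
      intro p q r apq apr aqr hp hq hr
      rcases hp with h | h | h | h
      · exact Or.inl h
      · exact Or.inr h
      · by_contra hn
        push_neg at hn
        have hcomp := hCout p h hn.1 hn.2
        have hq' : q ∈ C ∨ q ∈ D := by
          rcases hq with h' | h' | h' | h'
          · exact absurd (hcomp.1 q h') apq.ne_one'
          · exact absurd (hcomp.2 q h') apq.ne_one'
          · exact Or.inl h'
          · exact Or.inr h'
        have hr' : r ∈ C ∨ r ∈ D := by
          rcases hr with h' | h' | h' | h'
          · exact absurd (hcomp.1 r h') apr.ne_one'
          · exact absurd (hcomp.2 r h') apr.ne_one'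
          · exact Or.inl h'
          · exact Or.inr h'
        exact pig C D hCcl hDcl p q r (Or.inl h) hq' hr' apq apr aqr
      · by_contra hn
        push_neg at hn
        have hcomp := hDout p h hn.1 hn.2
        have hq' : q ∈ C ∨ q ∈ D := by
          rcases hq with h' | h' | h' | h'
          · exact absurd (hcomp.1 q h') apq.ne_one'
          · exact absurd (hcomp.2 q h') apq.ne_one'
          · exact Or.inl h'
          · exact Or.inr h'
        have hr' : r ∈ C ∨ r ∈ D := by
          rcases hr with h' | h' | h' | h'
          · exact absurd (hcomp.1 r h') apr.ne_one'
          · exact absurd (hcomp.2 r h') apr.ne_one'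
          · exact Or.inl h'
          · exact Or.inr h'
        exact pig C D hCcl hDcl p q r (Or.inr h) hq' hr' apq apr aqr
    have m1 := hmem s1 s2 s3 a12 a13 a23 hU1 hU2 hU3
    have m2 := hmem s2 s1 s3 a12.symm'' a23 a13 hU2 hU1 hU3
    have m3 := hmem s3 s1 s2 a13.symm'' a23.symm'' a12 hU3 hU1 hU2
    exact pig A B hAcl hBcl s1 s2 s3 m1 m2 m3 a12 a13 a23

end Trigraph

/-- If a connected claw-free trigraph contains two deletion-minimal
homogeneous pairs of strong cliques with skew intersection, then it is degenerate. -/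
theorem skew_intersection_degenerate {V : Type} [Fintype V] (G : Trigraph V)
    (hconn : G.Connected) (hcf : G.ClawFree) (A1 B1 A2 B2 : Set V)
    (h1 : G.DeletionMinimal A1 B1) (h2 : G.DeletionMinimal A2 B2)
    (hskew : Trigraph.SkewIntersection A1 B1 A2 B2) :
    ¬ G.NonDegenerate := by
  rcases hskew with ⟨⟨x, hx⟩, ⟨y, hy⟩⟩ | ⟨⟨x, hx⟩, ⟨y, hy⟩⟩ | ⟨⟨x, hx⟩, ⟨y, hy⟩⟩ | ⟨⟨x, hx⟩, ⟨y, hy⟩⟩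
  · exact Trigraph.skew_main G hconn hcf A1 B1 A2 B2 h1 h2 hx.1 hx.2 hy.1 hy.2
  · exact Trigraph.skew_main G hconn hcf B1 A1 A2 B2 h1.symm'' h2 hx.1 hx.2 hy.1 hy.2
  · exact Trigraph.skew_main G hconn hcf A2 B2 A1 B1 h2 h1 hx.1 hx.2 hy.1 hy.2
  · exact Trigraph.skew_main G hconn hcf B2 A2 A1 B1 h2.symm'' h1 hx.1 hx.2 hy.1 hy.2
end

section
/- Suppose G is a trigraph containing two deletion-minimal homogeneous pairs of strong cliques (A1, B1) and (A2, B2) without skew intersection, such that A1 ∩ A2 ≠ ∅. Then B1 ∩ B2 ≠ ∅. -/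
/-- If a trigraph contains two deletion-minimal homogeneous pairs of strong
cliques without skew intersection such that A1 ∩ A2 ≠ ∅, then B1 ∩ B2 ≠ ∅. -/
theorem nonskew_intersection {V : Type} [Fintype V] (G : Trigraph V)
    (A1 B1 A2 B2 : Set V)
    (h1 : G.DeletionMinimal A1 B1) (h2 : G.DeletionMinimal A2 B2)
    (hskew : ¬ Trigraph.SkewIntersection A1 B1 A2 B2)
    (hA : (A1 ∩ A2).Nonempty) :
    (B1 ∩ B2).Nonempty := by
  by_contra hB
  obtain ⟨x, hxA1, hxA2⟩ := hA
  obtain ⟨⟨hA1ne, hB1ne, hdisj1, hcl1, hcl1', hns1, hhom1⟩, hsq1, hArel1, hBrel1⟩ := h1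
  obtain ⟨⟨hA2ne, hB2ne, hdisj2, hcl2, hcl2', hns2, hhom2⟩, hsq2, hArel2, hBrel2⟩ := h2
  have hA1B2 : ∀ v ∈ A1, v ∉ B2 := fun v hv hv' =>
    hskew (Or.inl ⟨⟨x, hxA1, hxA2⟩, ⟨v, hv, hv'⟩⟩)
  have hA2B1 : ∀ v ∈ B1, v ∉ A2 := fun v hv hv' =>
    hskew (Or.inr (Or.inr (Or.inl ⟨⟨x, hxA2, hxA1⟩, ⟨v, hv', hv⟩⟩)))
  have hB1B2 : ∀ v ∈ B1, v ∉ B2 := fun v hv hv' => hB ⟨v, hv, hv'⟩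
  obtain ⟨hxc, hxa⟩ := hArel1 x hxA1
  have hb : ∃ b ∈ B1, G.θ x b ≠ 1 := by
    by_contra h; push_neg at h
    exact hxc (fun u hu v hv => by
      simp only [Set.mem_singleton_iff] at hu; subst hu; exact h v hv)
  obtain ⟨b, hbB1, hbθ⟩ := hb
  have hbnot : b ∉ A2 ∪ B2 := by
    rintro (h | h)
    · exact hA2B1 b hbB1 h
    · exact hB1B2 b hbB1 h
  have hbanti : G.StronglyAnticomplete {b} A2 := by
    rcases (hhom2 b hbnot).1 with h | h
    · have := h b rfl x hxA2
      rw [G.symm] at hbθ; exact absurd this hbθ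
    · exact h
  have ha : ∃ a ∈ A1, G.θ b a ≠ -1 := by
    by_contra h; push_neg at h
    exact (hBrel1 b hbB1).2 (fun u hu v hv => by
      simp only [Set.mem_singleton_iff] at hu; subst hu; exact h v hv)
  obtain ⟨a, haA1, haθ⟩ := ha
  have haA2 : a ∉ A2 := fun h => haθ (hbanti b rfl a h)
  have hanot : a ∉ A2 ∪ B2 := by
    rintro (h | h)
    · exact haA2 h
    · exact hA1B2 a haA1 h
  obtain ⟨hxc2, hxa2⟩ := hArel2 x hxA2
  have hc : ∃ c ∈ B2, G.θ x c ≠ 1 := by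
    by_contra h; push_neg at h
    exact hxc2 (fun u hu v hv => by
      simp only [Set.mem_singleton_iff] at hu; subst hu; exact h v hv)
  obtain ⟨c, hcB2, hcθ⟩ := hc
  have hc' : ∃ c' ∈ B2, G.θ x c' ≠ -1 := by
    by_contra h; push_neg at h
    exact hxa2 (fun u hu v hv => by
      simp only [Set.mem_singleton_iff] at hu; subst hu; exact h v hv)
  obtain ⟨c', hc'B2, hc'θ⟩ := hc'
  have hcnot : c ∉ A1 ∪ B1 := by
    rintro (h | h)
    · exact hA1B2 c h hcB2
    · exact hB1B2 c h hcB2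
  have hc'not : c' ∉ A1 ∪ B1 := by
    rintro (h | h)
    · exact hA1B2 c' h hc'B2
    · exact hB1B2 c' h hc'B2
  have hcanti : G.StronglyAnticomplete {c} A1 := by
    rcases (hhom1 c hcnot).1 with h | h
    · have := h c rfl x hxA1
      rw [G.symm] at hcθ; exact absurd this hcθ
    · exact h
  have hc'comp : G.StronglyComplete {c'} A1 := by
    rcases (hhom1 c' hc'not).1 with h | h
    · exact h
    · have := h c' rfl x hxA1
      rw [G.symm] at hc'θ; exact absurd this hc'θ
  rcases (hhom2 a hanot).2 with h | h
  · have h1' := h a rfl c hcB2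
    have h2' := hcanti c rfl a haA1
    simp only [Trigraph.StrongAdj, Trigraph.StrongAntiAdj] at h1' h2'
    rw [G.symm] at h2'
    omega
  · have h1' := h a rfl c' hc'B2
    have h2' := hc'comp c' rfl a haA1
    simp only [Trigraph.StrongAdj, Trigraph.StrongAntiAdj] at h1' h2'
    rw [G.symm] at h2'
    omega
end

section
/- In any trigraph, every square-connected homogeneous pair of strong cliques is deletion-minimal. -/
namespace Trigraph

lemma antiAdj_symm' {V : Type} (G : Trigraph V) {u v : V} (h : G.AntiAdj u v) :
    G.AntiAdj v u := ⟨h.1.symm, by rw [G.symm v u]; exact h.2⟩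

lemma adj_symm' {V : Type} (G : Trigraph V) {u v : V} (h : G.Adj u v) :
    G.Adj v u := ⟨h.1.symm, by rw [G.symm v u]; exact h.2⟩

lemma isSquare_rot {V : Type} (G : Trigraph V) {v1 v2 v3 v4 : V}
    (h : G.IsSquare v1 v2 v3 v4) : G.IsSquare v2 v3 v4 v1 := by
  obtain ⟨h13, h24, h12, h23, h34, h41⟩ := h
  exact ⟨h24, G.antiAdj_symm' h13, h23, h34, h41, h12⟩

/-- An antiadjacent pair inside `A ∪ B` (two strong cliques) splits across `A` and `B`. -/
lemma antiAdj_split {V : Type} (G : Trigraph V) {A B : Set V}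
    (hA : G.IsStrongClique A) (hB : G.IsStrongClique B) {u w : V}
    (hu : u ∈ A ∪ B) (hw : w ∈ A ∪ B) (h : G.AntiAdj u w) :
    (u ∈ A ∧ w ∈ B) ∨ (u ∈ B ∧ w ∈ A) := by
  obtain ⟨hne, hθ⟩ := h
  rcases hu with hu | hu <;> rcases hw with hw | hw
  · have h1 : G.θ u w = 1 := hA hu hw hne
    omega
  · exact Or.inl ⟨hu, hw⟩
  · exact Or.inr ⟨hu, hw⟩
  · have h1 : G.θ u w = 1 := hB hu hw hne
    omega

/-- If `v1 ∈ A` is part of a square inside `A ∪ B`, then `v1` is neither strongly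
complete nor strongly anticomplete to `B`. -/
lemma key {V : Type} (G : Trigraph V) {A B : Set V}
    (hA : G.IsStrongClique A) (hB : G.IsStrongClique B) (hdisj : Disjoint A B)
    {v1 v2 v3 v4 : V} (hsq : G.IsSquare v1 v2 v3 v4)
    (m1 : v1 ∈ A ∪ B) (m2 : v2 ∈ A ∪ B) (m3 : v3 ∈ A ∪ B) (m4 : v4 ∈ A ∪ B)
    (ha : v1 ∈ A) :
    ¬ G.StronglyComplete {v1} B ∧ ¬ G.StronglyAnticomplete {v1} B := by
  obtain ⟨h13, h24, h12, h23, h34, h41⟩ := hsq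
  have hv3B : v3 ∈ B := by
    rcases G.antiAdj_split hA hB m1 m3 h13 with ⟨_, h⟩ | ⟨h, _⟩
    · exact h
    · exact (Set.disjoint_left.mp hdisj ha h).elim
  constructor
  · intro hc
    have h1 : G.θ v1 v3 = 1 := hc v1 rfl v3 hv3B
    have := h13.2
    omega
  · intro hc
    rcases G.antiAdj_split hA hB m2 m4 h24 with ⟨_, h4B⟩ | ⟨h2B, _⟩
    · have h1 : G.θ v1 v4 = -1 := hc v1 rfl v4 h4B
      have h2 : G.θ v4 v1 = G.θ v1 v4 := G.symm v4 v1
      have := h41.2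
      omega
    · have h1 : G.θ v1 v2 = -1 := hc v1 rfl v2 h2B
      have := h12.2
      omega

/-- Any square inside `A ∪ B` yields two distinct vertices in `A` and two in `B`. -/
lemma square_two_each {V : Type} (G : Trigraph V) {A B : Set V}
    (hA : G.IsStrongClique A) (hB : G.IsStrongClique B)
    {v1 v2 v3 v4 : V} (hsq : G.IsSquare v1 v2 v3 v4)
    (hsub : ({v1, v2, v3, v4} : Set V) ⊆ A ∪ B) :
    (∃ a a', a ∈ A ∧ a' ∈ A ∧ a ≠ a') ∧ (∃ b b', b ∈ B ∧ b' ∈ B ∧ b ≠ b') := by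
  obtain ⟨h13, h24, h12, h23, h34, h41⟩ := hsq
  have m1 : v1 ∈ A ∪ B := hsub (by simp)
  have m2 : v2 ∈ A ∪ B := hsub (by simp)
  have m3 : v3 ∈ A ∪ B := hsub (by simp)
  have m4 : v4 ∈ A ∪ B := hsub (by simp)
  have ne12 : v1 ≠ v2 := h12.1
  have ne14 : v1 ≠ v4 := h41.1.symm
  have ne32 : v3 ≠ v2 := h23.1.symm
  have ne34 : v3 ≠ v4 := h34.1
  rcases G.antiAdj_split hA hB m1 m3 h13 with ⟨h1A, h3B⟩ | ⟨h1B, h3A⟩ <;>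
    rcases G.antiAdj_split hA hB m2 m4 h24 with ⟨h2A, h4B⟩ | ⟨h2B, h4A⟩
  · exact ⟨⟨v1, v2, h1A, h2A, ne12⟩, ⟨v3, v4, h3B, h4B, ne34⟩⟩
  · exact ⟨⟨v1, v4, h1A, h4A, ne14⟩, ⟨v3, v2, h3B, h2B, ne32⟩⟩
  · exact ⟨⟨v3, v2, h3A, h2A, ne32⟩, ⟨v1, v4, h1B, h4B, ne14⟩⟩
  · exact ⟨⟨v3, v4, h3A, h4A, ne34⟩, ⟨v1, v2, h1B, h2B, ne12⟩⟩

end Trigraph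

/-- In any trigraph, every square-connected homogeneous pair of strong
cliques is deletion-minimal. -/
theorem squareConnected_deletionMinimal {V : Type} [Fintype V] (G : Trigraph V)
    (A B : Set V) (h : G.SquareConnected A B) :
    G.DeletionMinimal A B := by
  obtain ⟨hp, hPA, hPB⟩ := h
  obtain ⟨hAne, hBne, hdisj, hAcl, hBcl, hnotsing, hhom⟩ := hp
  -- A or B has two distinct elements
  have htwo : (∃ a a', a ∈ A ∧ a' ∈ A ∧ a ≠ a') ∨ (∃ b b', b ∈ B ∧ b' ∈ B ∧ b ≠ b') := by
    by_contra hc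
    push_neg at hc
    obtain ⟨hcA, hcB⟩ := hc
    obtain ⟨a, haA⟩ := hAne
    obtain ⟨b, hbB⟩ := hBne
    exact hnotsing ⟨a, b,
      Set.eq_singleton_iff_unique_mem.mpr ⟨haA, fun x hx => hcA x a hx haA⟩,
      Set.eq_singleton_iff_unique_mem.mpr ⟨hbB, fun x hx => hcB x b hx hbB⟩⟩
  -- there is a square in A ∪ B
  have hsq : G.HasSquareIn (A ∪ B) := by
    rcases htwo with ⟨a, a', haA, ha'A, hne⟩ | ⟨b, b', hbB, hb'B, hne⟩
    · obtain ⟨v1, v2, v3, v4, hs, hsub, _, _⟩ :=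
        hPA {a} (A \ {a}) ⟨a, rfl⟩ ⟨a', ha'A, hne.symm⟩
          (by rw [Set.singleton_union, Set.insert_diff_singleton,
                Set.insert_eq_self.mpr haA])
          (by simp [Set.disjoint_left])
      exact ⟨v1, v2, v3, v4, hs, hsub⟩
    · obtain ⟨v1, v2, v3, v4, hs, hsub, _, _⟩ :=
        hPB {b} (B \ {b}) ⟨b, rfl⟩ ⟨b', hb'B, hne.symm⟩
          (by rw [Set.singleton_union, Set.insert_diff_singleton,
                Set.insert_eq_self.mpr hbB])
          (by simp [Set.disjoint_left])
      exact ⟨v1, v2, v3, v4, hs, hsub⟩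
  obtain ⟨w1, w2, w3, w4, hws, hwsub⟩ := hsq
  obtain ⟨hAtwo, hBtwo⟩ := G.square_two_each hAcl hBcl hws hwsub
  refine ⟨⟨hAne, hBne, hdisj, hAcl, hBcl, hnotsing, hhom⟩,
    ⟨w1, w2, w3, w4, hws, hwsub⟩, ?_, ?_⟩
  · intro a haA
    obtain ⟨x, x', hx, hx', hne⟩ := hAtwo
    have hdiff : (A \ {a}).Nonempty := by
      rcases eq_or_ne x a with rfl | hxa
      · exact ⟨x', hx', fun hh => hne (Set.mem_singleton_iff.mp hh).symm⟩
      · exact ⟨x, hx, hxa⟩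
    obtain ⟨v1, v2, v3, v4, hs, hsub, hm1, _⟩ :=
      hPA {a} (A \ {a}) ⟨a, rfl⟩ hdiff
        (by rw [Set.singleton_union, Set.insert_diff_singleton,
              Set.insert_eq_self.mpr haA])
        (by simp [Set.disjoint_left])
    obtain ⟨y, hy1, hy2⟩ := hm1
    rw [Set.mem_singleton_iff] at hy2
    subst hy2
    have m1 : v1 ∈ A ∪ B := hsub (by simp)
    have m2 : v2 ∈ A ∪ B := hsub (by simp)
    have m3 : v3 ∈ A ∪ B := hsub (by simp)
    have m4 : v4 ∈ A ∪ B := hsub (by simp)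
    simp only [Set.mem_insert_iff, Set.mem_singleton_iff] at hy1
    rcases hy1 with rfl | rfl | rfl | rfl
    · exact G.key hAcl hBcl hdisj hs m1 m2 m3 m4 haA
    · exact G.key hAcl hBcl hdisj (G.isSquare_rot hs) m2 m3 m4 m1 haA
    · exact G.key hAcl hBcl hdisj (G.isSquare_rot (G.isSquare_rot hs)) m3 m4 m1 m2 haA
    · exact G.key hAcl hBcl hdisj (G.isSquare_rot (G.isSquare_rot (G.isSquare_rot hs)))
        m4 m1 m2 m3 haA
  · intro b hbB
    obtain ⟨x, x', hx, hx', hne⟩ := hBtwo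
    have hdiff : (B \ {b}).Nonempty := by
      rcases eq_or_ne x b with rfl | hxb
      · exact ⟨x', hx', fun hh => hne (Set.mem_singleton_iff.mp hh).symm⟩
      · exact ⟨x, hx, hxb⟩
    obtain ⟨v1, v2, v3, v4, hs, hsub, hm1, _⟩ :=
      hPB {b} (B \ {b}) ⟨b, rfl⟩ hdiff
        (by rw [Set.singleton_union, Set.insert_diff_singleton,
              Set.insert_eq_self.mpr hbB])
        (by simp [Set.disjoint_left])
    rw [Set.union_comm] at hsub
    obtain ⟨y, hy1, hy2⟩ := hm1
    rw [Set.mem_singleton_iff] at hy2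
    subst hy2
    have m1 : v1 ∈ B ∪ A := hsub (by simp)
    have m2 : v2 ∈ B ∪ A := hsub (by simp)
    have m3 : v3 ∈ B ∪ A := hsub (by simp)
    have m4 : v4 ∈ B ∪ A := hsub (by simp)
    simp only [Set.mem_insert_iff, Set.mem_singleton_iff] at hy1
    rcases hy1 with rfl | rfl | rfl | rfl
    · exact G.key hBcl hAcl hdisj.symm hs m1 m2 m3 m4 hbB
    · exact G.key hBcl hAcl hdisj.symm (G.isSquare_rot hs) m2 m3 m4 m1 hbB
    · exact G.key hBcl hAcl hdisj.symm (G.isSquare_rot (G.isSquare_rot hs)) m3 m4 m1 m2 hbB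
    · exact G.key hBcl hAcl hdisj.symm (G.isSquare_rot (G.isSquare_rot (G.isSquare_rot hs)))
        m4 m1 m2 m3 hbB
end

section
/- Suppose G is a trigraph containing two square-connected homogeneous pairs of strong cliques (A1, B1) and (A2, B2) without skew intersection and such that A1 ∩ A2 ≠ ∅ and B1 ∩ B2 ≠ ∅. Then (A1 ∪ A2, B1 ∪ B2) is a square-connected homogeneous pair of strong cliques. -/
section Aux

variable {V : Type} {G : Trigraph V}

lemma squareMeets_mono {X X' S1 S1' S2 S2' : Set V}
    (h : G.SquareMeets X S1 S2) (hX : X ⊆ X') (h1 : S1 ⊆ S1') (h2 : S2 ⊆ S2') :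
    G.SquareMeets X' S1' S2' := by
  obtain ⟨a, b, c, d, hs, hsub, ⟨p, hp1, hp2⟩, ⟨q, hq1, hq2⟩⟩ := h
  exact ⟨a, b, c, d, hs, hsub.trans hX, ⟨p, hp1, h1 hp2⟩, ⟨q, hq1, h2 hq2⟩⟩

lemma meets_union {A1 A2 U X' X'' : Set V}
    (hx : (A1 ∩ A2).Nonempty)
    (hsm1 : ∀ P Q : Set V, P.Nonempty → Q.Nonempty → P ∪ Q = A1 → Disjoint P Q →
      G.SquareMeets U P Q)
    (hsm2 : ∀ P Q : Set V, P.Nonempty → Q.Nonempty → P ∪ Q = A2 → Disjoint P Q →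
      G.SquareMeets U P Q)
    (h' : X'.Nonempty) (h'' : X''.Nonempty) (hu : X' ∪ X'' = A1 ∪ A2)
    (hd : Disjoint X' X'') :
    G.SquareMeets U X' X'' := by
  by_cases hb : (X' ∩ A1).Nonempty ∧ (X'' ∩ A1).Nonempty
  · have h := hsm1 (X' ∩ A1) (X'' ∩ A1) hb.1 hb.2
      (by rw [← Set.union_inter_distrib_right, hu, Set.union_inter_cancel_left])
      (hd.mono Set.inter_subset_left Set.inter_subset_left)
    exact squareMeets_mono h subset_rfl Set.inter_subset_left Set.inter_subset_left
  · obtain ⟨x, hx1, hx2⟩ := hx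
    have hxU : x ∈ X' ∪ X'' := by rw [hu]; exact Or.inl hx1
    rcases hxU with hx' | hx''
    · -- x ∈ X', so X'' ∩ A1 is empty
      have hne : ¬ (X'' ∩ A1).Nonempty := fun h => hb ⟨⟨x, hx', hx1⟩, h⟩
      have hX''A2 : X'' ⊆ A2 := by
        intro y hy
        have : y ∈ A1 ∪ A2 := by rw [← hu]; exact Or.inr hy
        rcases this with h1 | h2
        · exact absurd ⟨y, hy, h1⟩ hne
        · exact h2
      have h := hsm2 (X' ∩ A2) (X'' ∩ A2) ⟨x, hx', hx2⟩
        (h''.mono (fun y hy => ⟨hy, hX''A2 hy⟩))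
        (by rw [← Set.union_inter_distrib_right, hu, Set.union_inter_cancel_right])
        (hd.mono Set.inter_subset_left Set.inter_subset_left)
      exact squareMeets_mono h subset_rfl Set.inter_subset_left Set.inter_subset_left
    · -- x ∈ X'', so X' ∩ A1 is empty
      have hne : ¬ (X' ∩ A1).Nonempty := fun h => hb ⟨h, ⟨x, hx'', hx1⟩⟩
      have hX'A2 : X' ⊆ A2 := by
        intro y hy
        have : y ∈ A1 ∪ A2 := by rw [← hu]; exact Or.inl hy
        rcases this with h1 | h2
        · exact absurd ⟨y, hy, h1⟩ hne
        · exact h2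
      have h := hsm2 (X' ∩ A2) (X'' ∩ A2)
        (h'.mono (fun y hy => ⟨hy, hX'A2 hy⟩)) ⟨x, hx'', hx2⟩
        (by rw [← Set.union_inter_distrib_right, hu, Set.union_inter_cancel_right])
        (hd.mono Set.inter_subset_left Set.inter_subset_left)
      exact squareMeets_mono h subset_rfl Set.inter_subset_left Set.inter_subset_left

lemma hposc_swap {A B : Set V} (h : G.HPOSC A B) : G.HPOSC B A := by
  obtain ⟨hA, hB, hd, hcA, hcB, hns, hhom⟩ := h
  refine ⟨hB, hA, hd.symm, hcB, hcA, ?_, ?_⟩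
  · rintro ⟨b, a, hb, ha⟩; exact hns ⟨a, b, ha, hb⟩
  · intro v hv
    have := hhom v (by rw [Set.union_comm] at hv; exact hv)
    exact ⟨this.2, this.1⟩

/-- Vertices of `A1 \ A2` (outside `B2`) are strongly complete to `A2`. -/
lemma key_complete {A1 B1 A2 B2 : Set V}
    (h1 : G.HPOSC A1 B1) (h2 : G.HPOSC A2 B2)
    (hA : (A1 ∩ A2).Nonempty) (h12 : A1 ∩ B2 = ∅)
    {u : V} (hu : u ∈ A1) (hu2 : u ∉ A2) : ∀ v ∈ A2, G.θ u v = 1 := by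
  obtain ⟨x, hx1, hx2⟩ := hA
  have huB2 : u ∉ B2 := fun h =>
    (Set.eq_empty_iff_forall_notMem.mp h12 u) ⟨hu, h⟩
  have hhom := (h2.2.2.2.2.2.2 u (by
    intro h; rcases h with h | h; exacts [hu2 h, huB2 h])).1
  rcases hhom with hc | hac
  · intro v hv; exact hc u rfl v hv
  · exfalso
    have hne : u ≠ x := fun h => hu2 (h ▸ hx2)
    have h1' : G.θ u x = 1 := h1.2.2.2.1 hu hx1 hne
    have h2' : G.θ u x = -1 := hac u rfl x hx2
    omega

lemma clique_union {A1 B1 A2 B2 : Set V}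
    (h1 : G.HPOSC A1 B1) (h2 : G.HPOSC A2 B2)
    (hA : (A1 ∩ A2).Nonempty) (h12 : A1 ∩ B2 = ∅) (h21 : A2 ∩ B1 = ∅) :
    G.IsStrongClique (A1 ∪ A2) := by
  have hA' : (A2 ∩ A1).Nonempty := hA.mono (fun y hy => ⟨hy.2, hy.1⟩)
  have h21' : A2 ∩ B1 = ∅ := h21
  intro u hu v hv hne
  rcases hu with hu1 | hu2
  · rcases hv with hv1 | hv1
    · exact h1.2.2.2.1 hu1 hv1 hne
    · by_cases h : u ∈ A2
      · exact h2.2.2.2.1 h hv1 hne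
      · exact key_complete h1 h2 hA h12 hu1 h v hv1
  · rcases hv with hv1 | hv1
    · by_cases h : v ∈ A2
      · exact h2.2.2.2.1 hu2 h hne
      · have := key_complete h1 h2 hA h12 hv1 h u hu2
        show G.θ u v = 1
        rw [G.symm]; exact this
    · exact h2.2.2.2.1 hu2 hv1 hne

lemma combine_hom {X Y : Set V} {v : V} (hx : (X ∩ Y).Nonempty)
    (h1 : G.StronglyComplete {v} X ∨ G.StronglyAnticomplete {v} X)
    (h2 : G.StronglyComplete {v} Y ∨ G.StronglyAnticomplete {v} Y) :
    G.StronglyComplete {v} (X ∪ Y) ∨ G.StronglyAnticomplete {v} (X ∪ Y) := by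
  obtain ⟨x, hxX, hxY⟩ := hx
  rcases h1 with h1 | h1 <;> rcases h2 with h2 | h2
  · left; intro u hu w hw
    rcases hw with hw | hw; exacts [h1 u hu w hw, h2 u hu w hw]
  · exfalso
    have ha : G.θ v x = 1 := h1 v rfl x hxX
    have hb : G.θ v x = -1 := h2 v rfl x hxY
    omega
  · exfalso
    have ha : G.θ v x = -1 := h1 v rfl x hxX
    have hb : G.θ v x = 1 := h2 v rfl x hxY
    omega
  · right; intro u hu w hw
    rcases hw with hw | hw; exacts [h1 u hu w hw, h2 u hu w hw]

end Aux

/-- The union of two square-connected homogeneous pairs of strong cliques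
without skew intersection, meeting in both parts, is a square-connected homogeneous pair
of strong cliques. -/
theorem squareConnected_union {V : Type} [Fintype V] (G : Trigraph V)
    (A1 B1 A2 B2 : Set V)
    (h1 : G.SquareConnected A1 B1) (h2 : G.SquareConnected A2 B2)
    (hskew : ¬ Trigraph.SkewIntersection A1 B1 A2 B2)
    (hA : (A1 ∩ A2).Nonempty) (hB : (B1 ∩ B2).Nonempty) :
    G.SquareConnected (A1 ∪ A2) (B1 ∪ B2) := by
  obtain ⟨hp1, hsA1, hsB1⟩ := h1
  obtain ⟨hp2, hsA2, hsB2⟩ := h2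
  -- no skew intersection gives the cross intersections empty
  have hA1B2 : A1 ∩ B2 = ∅ := by
    by_contra h
    exact hskew (Or.inl ⟨hA, Set.nonempty_iff_ne_empty.mpr h⟩)
  have hB1A2 : B1 ∩ A2 = ∅ := by
    by_contra h
    exact hskew (Or.inr (Or.inl ⟨Set.nonempty_iff_ne_empty.mpr h, hB⟩))
  have hA2B1 : A2 ∩ B1 = ∅ := by
    rw [Set.inter_comm]; exact hB1A2
  have hB2A1 : B2 ∩ A1 = ∅ := by
    rw [Set.inter_comm]; exact hA1B2
  have hsub1 : A1 ∪ B1 ⊆ (A1 ∪ A2) ∪ (B1 ∪ B2) := by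
    intro y hy; rcases hy with h | h
    exacts [Or.inl (Or.inl h), Or.inr (Or.inl h)]
  have hsub2 : A2 ∪ B2 ⊆ (A1 ∪ A2) ∪ (B1 ∪ B2) := by
    intro y hy; rcases hy with h | h
    exacts [Or.inl (Or.inr h), Or.inr (Or.inr h)]
  refine ⟨⟨hp1.1.mono Set.subset_union_left, hp1.2.1.mono Set.subset_union_left,
    ?_, ?_, ?_, ?_, ?_⟩, ?_, ?_⟩
  · -- disjointness
    rw [Set.disjoint_union_left, Set.disjoint_union_right, Set.disjoint_union_right]
    exact ⟨⟨hp1.2.2.1, Set.disjoint_iff_inter_eq_empty.mpr hA1B2⟩,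
      ⟨Set.disjoint_iff_inter_eq_empty.mpr hA2B1, hp2.2.2.1⟩⟩
  · exact clique_union hp1 hp2 hA hA1B2 hA2B1
  · -- B1 ∪ B2 clique, by symmetry
    exact clique_union (hposc_swap hp1) (hposc_swap hp2) hB hB1A2 hB2A1
  · -- not both singletons
    rintro ⟨a, b, ha, hb⟩
    refine hp1.2.2.2.2.2.1 ⟨a, b, ?_, ?_⟩
    · exact (hp1.1.subset_singleton_iff.mp (ha ▸ Set.subset_union_left))
    · exact (hp1.2.1.subset_singleton_iff.mp (hb ▸ Set.subset_union_left))
  · -- homogeneity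
    intro v hv
    have hv1 : v ∉ A1 ∪ B1 := fun h => hv (hsub1 h)
    have hv2 : v ∉ A2 ∪ B2 := fun h => hv (hsub2 h)
    have hh1 := hp1.2.2.2.2.2.2 v hv1
    have hh2 := hp2.2.2.2.2.2.2 v hv2
    exact ⟨combine_hom hA hh1.1 hh2.1, combine_hom hB hh1.2 hh2.2⟩
  · -- square-connectedness on the A side
    intro A' A'' h' h'' hu hd
    refine meets_union hA (fun P Q hP hQ hPQ hdPQ => ?_)
      (fun P Q hP hQ hPQ hdPQ => ?_) h' h'' hu hd
    · exact squareMeets_mono (hsA1 P Q hP hQ hPQ hdPQ) hsub1 subset_rfl subset_rfl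
    · exact squareMeets_mono (hsA2 P Q hP hQ hPQ hdPQ) hsub2 subset_rfl subset_rfl
  · -- square-connectedness on the B side
    intro B' B'' h' h'' hu hd
    refine meets_union hB (fun P Q hP hQ hPQ hdPQ => ?_)
      (fun P Q hP hQ hPQ hdPQ => ?_) h' h'' hu hd
    · exact squareMeets_mono (hsB1 P Q hP hQ hPQ hdPQ) hsub1 subset_rfl subset_rfl
    · exact squareMeets_mono (hsB2 P Q hP hQ hPQ hdPQ) hsub2 subset_rfl subset_rfl
end

section
/- Let G be a trigraph and let a0, a1 be strongly adjacent vertices such that there exist vertices b0, b1 for which a0a1b1b0 is a square of G. If there exists a homogeneous pair of strong cliques (A, B) of G with {a0, a1} ⊆ A, then there exists a square-connected homogeneous pair of strong cliques (A*, B*) with {a0, a1} ⊆ A* such that for every homogeneous pair of strong cliques (A, B) of G with {a0, a1} ⊆ A we have A* ⊆ A and B* ⊆ B (in particular, (A*, B*) is the unique inclusion-minimal homogeneous pair of strong cliques whose first part contains a0 and a1). -/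
section AuxSCHPOSC

namespace Trigraph

variable {V : Type}

lemma aux_hposc_symm {G : Trigraph V} {A B : Set V} (h : G.HPOSC A B) : G.HPOSC B A := by
  obtain ⟨hA, hB, hd, hcA, hcB, hs, hh⟩ := h
  refine ⟨hB, hA, hd.symm, hcB, hcA, ?_, ?_⟩
  · rintro ⟨a, b, h1, h2⟩
    exact hs ⟨b, a, h2, h1⟩
  · intro v hv
    have hv' : v ∉ A ∪ B := by rw [Set.union_comm]; exact hv
    exact ⟨(hh v hv').2, (hh v hv').1⟩

lemma aux_force {G : Trigraph V} {A' B' : Set V} (h : G.HPOSC A' B')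
    {u w x : V} (hu : u ∈ A') (hw : w ∈ A') (hux : u ≠ x) (hwx : w ≠ x)
    (h1 : G.θ u x ≤ 0) (h2 : 0 ≤ G.θ w x) : x ∈ B' := by
  obtain ⟨hA, hB, hd, hcA, hcB, hs, hh⟩ := h
  have hxA : x ∉ A' := by
    intro hx
    have h3 : G.θ u x = 1 := hcA hu hx hux
    omega
  by_contra hxB
  have hout : x ∉ A' ∪ B' := by
    rintro (hxx | hxx)
    · exact hxA hxx
    · exact hxB hxx
  rcases (hh x hout).1 with hc | hac
  · have h3 : G.θ x u = 1 := hc x rfl u hu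
    have h4 := G.symm x u
    omega
  · have h3 : G.θ x w = -1 := hac x rfl w hw
    have h4 := G.symm x w
    omega

lemma aux_build_square {G : Trigraph V} {A B X Y : Set V}
    (hXA : X ⊆ A) (hYB : Y ⊆ B) (hd : Disjoint A B)
    (hcA : G.IsStrongClique A) (hcB : G.IsStrongClique B)
    {u w γ γ' : V} (hu : u ∈ X) (hw : w ∈ X) (hγ : γ ∈ Y) (hγ' : γ' ∈ Y)
    (e1 : G.θ u γ ≤ 0) (e2 : 0 ≤ G.θ w γ) (e3 : 0 ≤ G.θ u γ') (e4 : G.θ w γ' ≤ 0)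
    (hne : u ≠ w ∨ γ ≠ γ') :
    G.IsSquare u w γ γ' ∧ ({u, w, γ, γ'} : Set V) ⊆ X ∪ Y := by
  have huγ : u ≠ γ := fun h => Set.disjoint_left.mp hd (hXA hu) (h ▸ hYB hγ)
  have huγ' : u ≠ γ' := fun h => Set.disjoint_left.mp hd (hXA hu) (h ▸ hYB hγ')
  have hwγ : w ≠ γ := fun h => Set.disjoint_left.mp hd (hXA hw) (h ▸ hYB hγ)
  have hwγ' : w ≠ γ' := fun h => Set.disjoint_left.mp hd (hXA hw) (h ▸ hYB hγ')
  have huw : u ≠ w := by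
    rcases hne with h | h
    · exact h
    · intro he
      subst he
      have f1 : G.θ u γ = 0 := le_antisymm e1 e2
      have f2 : G.θ u γ' = 0 := le_antisymm e4 e3
      exact G.semi_matching u γ γ' huγ huγ' h f1 f2
  have hγγ' : γ ≠ γ' := by
    rcases hne with h | h
    · intro he
      subst he
      have f1 : G.θ γ u = 0 := by have := G.symm u γ; omega
      have f2 : G.θ γ w = 0 := by have := G.symm w γ; omega
      exact G.semi_matching γ u w (Ne.symm huγ) (Ne.symm hwγ) h f1 f2
    · exact h
  have sadjuw : G.θ u w = 1 := hcA (hXA hu) (hXA hw) huw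
  have sadjγγ' : G.θ γ γ' = 1 := hcB (hYB hγ) (hYB hγ') hγγ'
  refine ⟨⟨⟨huγ, ?_⟩, ⟨hwγ', ?_⟩, ⟨huw, Or.inl sadjuw⟩, ⟨hwγ, ?_⟩,
    ⟨hγγ', Or.inl sadjγγ'⟩, ⟨Ne.symm huγ', ?_⟩⟩, ?_⟩
  · rcases G.range_mem u γ with h | h | h <;> omega
  · rcases G.range_mem w γ' with h | h | h <;> omega
  · rcases G.range_mem w γ with h | h | h <;> omega
  · have hsy := G.symm γ' u
    rcases G.range_mem u γ' with h | h | h <;> omega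
  · intro x hx
    simp only [Set.mem_insert_iff, Set.mem_singleton_iff] at hx
    rcases hx with rfl | rfl | rfl | rfl
    exacts [Set.mem_union_left _ hu, Set.mem_union_left _ hw,
      Set.mem_union_right _ hγ, Set.mem_union_right _ hγ']

lemma aux_partition_erase {v : V} {P Q X : Set V} (hPQ : P ∪ Q = insert v X)
    (hd : Disjoint P Q) (hvP : v ∈ P) (hvX : v ∉ X) :
    (P \ {v}) ∪ Q = X ∧ Disjoint (P \ {v}) Q := by
  constructor
  · ext x
    simp only [Set.mem_union, Set.mem_diff, Set.mem_singleton_iff]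
    constructor
    · rintro (⟨hxP, hxv⟩ | hxQ)
      · have hx : x ∈ insert v X := hPQ ▸ (Set.mem_union_left _ hxP)
        rcases Set.mem_insert_iff.mp hx with h | h
        · exact absurd h hxv
        · exact h
      · have hx : x ∈ insert v X := hPQ ▸ (Set.mem_union_right _ hxQ)
        rcases Set.mem_insert_iff.mp hx with h | h
        · exact absurd (h ▸ hxQ) (Set.disjoint_left.mp hd hvP)
        · exact h
    · intro hx
      have hx2 : x ∈ P ∪ Q := hPQ ▸ Set.mem_insert_of_mem _ hx
      rcases hx2 with h | h
      · exact Or.inl ⟨h, fun he => hvX (he ▸ hx)⟩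
      · exact Or.inr h
  · exact hd.mono_left Set.diff_subset

lemma aux_mem_other {v y : V} {P Q X : Set V} (hPQ : P ∪ Q = insert v X)
    (hP' : ¬ (P \ {v}).Nonempty) (hvX : v ∉ X) (hyX : y ∈ X) : y ∈ Q := by
  have hy : y ∈ P ∪ Q := hPQ ▸ Set.mem_insert_of_mem _ hyX
  rcases hy with h | h
  · exact absurd ⟨y, h, fun he => hvX (he ▸ hyX)⟩ hP'
  · exact h

lemma aux_pair_split {x y : V} {P Q : Set V} (hPn : P.Nonempty) (hQn : Q.Nonempty)
    (hPQ : P ∪ Q = {x, y}) (hd : Disjoint P Q) :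
    (x ∈ P ∧ y ∈ Q) ∨ (y ∈ P ∧ x ∈ Q) := by
  have hx : x ∈ P ∪ Q := by rw [hPQ]; exact Set.mem_insert _ _
  have hy : y ∈ P ∪ Q := by rw [hPQ]; exact Set.mem_insert_of_mem _ rfl
  rcases hx with hx | hx <;> rcases hy with hy | hy
  · exfalso
    obtain ⟨q, hq⟩ := hQn
    have hq2 : q ∈ ({x, y} : Set V) := by rw [← hPQ]; exact Set.mem_union_right _ hq
    simp only [Set.mem_insert_iff, Set.mem_singleton_iff] at hq2
    rcases hq2 with rfl | rfl
    · exact Set.disjoint_left.mp hd hx hq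
    · exact Set.disjoint_left.mp hd hy hq
  · exact Or.inl ⟨hx, hy⟩
  · exact Or.inr ⟨hy, hx⟩
  · exfalso
    obtain ⟨p, hp⟩ := hPn
    have hp2 : p ∈ ({x, y} : Set V) := by rw [← hPQ]; exact Set.mem_union_left _ hp
    simp only [Set.mem_insert_iff, Set.mem_singleton_iff] at hp2
    rcases hp2 with rfl | rfl
    · exact Set.disjoint_left.mp hd hp hx
    · exact Set.disjoint_left.mp hd hp hy

/-- The invariant maintained while growing the minimal homogeneous pair. -/
def AuxInv (G : Trigraph V) (A B : Set V) (a0 a1 b0 b1 : V) (X Y : Set V) : Prop :=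
  X ⊆ A ∧ Y ⊆ B ∧ a0 ∈ X ∧ a1 ∈ X ∧ b0 ∈ Y ∧ b1 ∈ Y ∧
  (∀ P Q : Set V, P.Nonempty → Q.Nonempty → P ∪ Q = X → Disjoint P Q →
    ∃ u ∈ P, ∃ w ∈ Q, ∃ γ ∈ Y, ∃ γ' ∈ Y,
      G.θ u γ ≤ 0 ∧ 0 ≤ G.θ w γ ∧ 0 ≤ G.θ u γ' ∧ G.θ w γ' ≤ 0) ∧
  (∀ P Q : Set V, P.Nonempty → Q.Nonempty → P ∪ Q = Y → Disjoint P Q →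
    ∃ γ ∈ P, ∃ γ' ∈ Q, ∃ u ∈ X, ∃ w ∈ X,
      G.θ u γ ≤ 0 ∧ 0 ≤ G.θ w γ ∧ 0 ≤ G.θ u γ' ∧ G.θ w γ' ≤ 0) ∧
  (∀ A' B' : Set V, G.HPOSC A' B' → a0 ∈ A' → a1 ∈ A' → X ⊆ A' ∧ Y ⊆ B')

lemma aux_extendA {G : Trigraph V} {A B : Set V} {a0 a1 b0 b1 : V} {X Y : Set V}
    (hdAB : Disjoint A B) (hb01 : b0 ≠ b1)
    (hInv : AuxInv G A B a0 a1 b0 b1 X Y)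
    {v : V} (hvA : v ∈ A) (hvX : v ∉ X)
    (hm1 : ∃ β ∈ Y, G.θ v β ≤ 0) (hm2 : ∃ β ∈ Y, 0 ≤ G.θ v β) :
    AuxInv G A B a0 a1 b0 b1 (insert v X) Y := by
  obtain ⟨hXA, hYB, ha0, ha1, hb0, hb1, connA, connB, hmin⟩ := hInv
  obtain ⟨y, hyX, γ0, hγ0, γ1, hγ1, c1, c2, c3, c4⟩ :
      ∃ y ∈ X, ∃ γ ∈ Y, ∃ γ' ∈ Y,
        G.θ v γ ≤ 0 ∧ 0 ≤ G.θ y γ ∧ 0 ≤ G.θ v γ' ∧ G.θ y γ' ≤ 0 := by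
    obtain ⟨β, hβY, hβle⟩ := hm1
    by_cases hQ : ∃ δ ∈ Y, G.θ v δ = 1
    · obtain ⟨δ, hδY, hδ1⟩ := hQ
      have hPQ : {x | x ∈ Y ∧ G.θ v x ≤ 0} ∪ {x | x ∈ Y ∧ G.θ v x = 1} = Y := by
        ext x
        constructor
        · rintro (hx | hx) <;> exact hx.1
        · intro hx
          rcases G.range_mem v x with h | h | h
          · exact Or.inr ⟨hx, h⟩
          · exact Or.inl ⟨hx, by omega⟩
          · exact Or.inl ⟨hx, by omega⟩
      have hdisj : Disjoint {x | x ∈ Y ∧ G.θ v x ≤ 0} {x | x ∈ Y ∧ G.θ v x = 1} := by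
        rw [Set.disjoint_left]
        rintro x ⟨_, hx1⟩ ⟨_, hx2⟩
        omega
      obtain ⟨γ, hγP, γ', hγ'Q, u, huX, w, hwX, e1, e2, e3, e4⟩ :=
        connB {x | x ∈ Y ∧ G.θ v x ≤ 0} {x | x ∈ Y ∧ G.θ v x = 1}
          ⟨β, ⟨hβY, hβle⟩⟩ ⟨δ, ⟨hδY, hδ1⟩⟩ hPQ hdisj
      obtain ⟨hγY, hγle⟩ := hγP
      obtain ⟨hγ'Y, hγ'1⟩ := hγ'Q
      exact ⟨w, hwX, γ, hγY, γ', hγ'Y, hγle, e2, by omega, e4⟩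
    · push_neg at hQ
      obtain ⟨β', hβ'Y, hβ'ge⟩ := hm2
      have hall : ∀ δ ∈ Y, G.θ v δ ≤ 0 := by
        intro δ hδ
        have h1 := hQ δ hδ
        rcases G.range_mem v δ with h | h | h <;> omega
      have hβ'0 : G.θ v β' = 0 := le_antisymm (hall β' hβ'Y) hβ'ge
      have hQn : (Y \ {β'}).Nonempty := by
        rcases eq_or_ne b0 β' with h | h
        · exact ⟨b1, hb1, fun he => hb01 (h.trans (Set.mem_singleton_iff.mp he).symm)⟩
        · exact ⟨b0, hb0, fun he => h (Set.mem_singleton_iff.mp he)⟩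
      obtain ⟨γ, hγP, γ', hγ'Q, u, huX, w, hwX, e1, e2, e3, e4⟩ :=
        connB {β'} (Y \ {β'}) ⟨β', rfl⟩ hQn
          (Set.union_diff_cancel (Set.singleton_subset_iff.mpr hβ'Y))
          (Set.disjoint_left.mpr fun _ hx hx2 => hx2.2 hx)
      have hγeq : γ = β' := hγP
      subst hγeq
      exact ⟨u, huX, γ', hγ'Q.1, γ, hβ'Y, hall γ' hγ'Q.1, e3, by omega, e1⟩
  have hvy : v ≠ y := fun h => hvX (h ▸ hyX)
  refine ⟨Set.insert_subset hvA hXA, hYB, Set.mem_insert_of_mem _ ha0,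
    Set.mem_insert_of_mem _ ha1, hb0, hb1, ?_, ?_, ?_⟩
  · intro P Q hPn hQn hPQ hd
    have hvPQ : v ∈ P ∪ Q := by rw [hPQ]; exact Set.mem_insert _ _
    rcases hvPQ with hvP | hvQ
    · by_cases hP' : (P \ {v}).Nonempty
      · obtain ⟨hun, hdis⟩ := aux_partition_erase hPQ hd hvP hvX
        obtain ⟨u, huP, rest⟩ := connA _ _ hP' hQn hun hdis
        exact ⟨u, huP.1, rest⟩
      · have hyQ : y ∈ Q := aux_mem_other hPQ hP' hvX hyX
        exact ⟨v, hvP, y, hyQ, γ0, hγ0, γ1, hγ1, c1, c2, c3, c4⟩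
    · by_cases hQ' : (Q \ {v}).Nonempty
      · obtain ⟨hun, hdis⟩ := aux_partition_erase
          (by rw [Set.union_comm]; exact hPQ) hd.symm hvQ hvX
        obtain ⟨u, huP, w, hwQ, rest⟩ := connA _ _ hPn hQ'
          (by rw [Set.union_comm]; exact hun) hdis.symm
        exact ⟨u, huP, w, hwQ.1, rest⟩
      · have hyP : y ∈ P := aux_mem_other (by rw [Set.union_comm]; exact hPQ) hQ' hvX hyX
        exact ⟨y, hyP, v, hvQ, γ1, hγ1, γ0, hγ0, c4, c3, c2, c1⟩
  · intro P Q hPn hQn hPQ hd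
    obtain ⟨γ, hγP, γ', hγ'Q, u, huX, w, hwX, e⟩ := connB P Q hPn hQn hPQ hd
    exact ⟨γ, hγP, γ', hγ'Q, u, Set.mem_insert_of_mem _ huX,
      w, Set.mem_insert_of_mem _ hwX, e⟩
  · intro A' B' h' h0 h1
    obtain ⟨hXA', hYB'⟩ := hmin A' B' h' h0 h1
    refine ⟨Set.insert_subset ?_ hXA', hYB'⟩
    obtain ⟨β, hβY, hβle⟩ := hm1
    obtain ⟨β', hβ'Y, hβ'ge⟩ := hm2
    have hβv : β ≠ v := fun h => (Set.disjoint_left.mp hdAB hvA) (h ▸ hYB hβY)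
    have hβ'v : β' ≠ v := fun h => (Set.disjoint_left.mp hdAB hvA) (h ▸ hYB hβ'Y)
    have s1 : G.θ β v ≤ 0 := by have := G.symm β v; omega
    have s2 : 0 ≤ G.θ β' v := by have := G.symm β' v; omega
    exact aux_force (aux_hposc_symm h') (hYB' hβY) (hYB' hβ'Y) hβv hβ'v s1 s2

lemma aux_extendB {G : Trigraph V} {A B : Set V} {a0 a1 b0 b1 : V} {X Y : Set V}
    (hdAB : Disjoint A B) (ha01 : a0 ≠ a1)
    (hInv : AuxInv G A B a0 a1 b0 b1 X Y)
    {v : V} (hvB : v ∈ B) (hvY : v ∉ Y)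
    (hm1 : ∃ u ∈ X, G.θ u v ≤ 0) (hm2 : ∃ u ∈ X, 0 ≤ G.θ u v) :
    AuxInv G A B a0 a1 b0 b1 X (insert v Y) := by
  obtain ⟨hXA, hYB, ha0, ha1, hb0, hb1, connA, connB, hmin⟩ := hInv
  obtain ⟨δ, hδY, r1, hr1X, r2, hr2X, d1, d2, d3, d4⟩ :
      ∃ δ ∈ Y, ∃ u ∈ X, ∃ w ∈ X,
        G.θ u v ≤ 0 ∧ 0 ≤ G.θ u δ ∧ 0 ≤ G.θ w v ∧ G.θ w δ ≤ 0 := by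
    obtain ⟨u0, hu0X, hu0le⟩ := hm1
    by_cases hQ : ∃ x ∈ X, G.θ x v = 1
    · obtain ⟨x0, hx0X, hx01⟩ := hQ
      have hPQ : {x | x ∈ X ∧ G.θ x v ≤ 0} ∪ {x | x ∈ X ∧ G.θ x v = 1} = X := by
        ext x
        constructor
        · rintro (hx | hx) <;> exact hx.1
        · intro hx
          rcases G.range_mem x v with h | h | h
          · exact Or.inr ⟨hx, h⟩
          · exact Or.inl ⟨hx, by omega⟩
          · exact Or.inl ⟨hx, by omega⟩
      have hdisj : Disjoint {x | x ∈ X ∧ G.θ x v ≤ 0} {x | x ∈ X ∧ G.θ x v = 1} := by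
        rw [Set.disjoint_left]
        rintro x ⟨_, hx1⟩ ⟨_, hx2⟩
        omega
      obtain ⟨u, huP, w, hwQ, γ, hγY, γ', hγ'Y, e1, e2, e3, e4⟩ :=
        connA {x | x ∈ X ∧ G.θ x v ≤ 0} {x | x ∈ X ∧ G.θ x v = 1}
          ⟨u0, ⟨hu0X, hu0le⟩⟩ ⟨x0, ⟨hx0X, hx01⟩⟩ hPQ hdisj
      obtain ⟨huX, hule⟩ := huP
      obtain ⟨hwX, hw1⟩ := hwQ
      exact ⟨γ', hγ'Y, u, huX, w, hwX, hule, e3, by omega, e4⟩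
    · push_neg at hQ
      obtain ⟨w0, hw0X, hw0ge⟩ := hm2
      have hall : ∀ x ∈ X, G.θ x v ≤ 0 := by
        intro x hx
        have h1 := hQ x hx
        rcases G.range_mem x v with h | h | h <;> omega
      have hw00 : G.θ w0 v = 0 := le_antisymm (hall w0 hw0X) hw0ge
      have hQn : (X \ {w0}).Nonempty := by
        rcases eq_or_ne a0 w0 with h | h
        · exact ⟨a1, ha1, fun he => ha01 (h.trans (Set.mem_singleton_iff.mp he).symm)⟩
        · exact ⟨a0, ha0, fun he => h (Set.mem_singleton_iff.mp he)⟩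
      obtain ⟨u, huP, w, hwQ, γ, hγY, γ', hγ'Y, e1, e2, e3, e4⟩ :=
        connA {w0} (X \ {w0}) ⟨w0, rfl⟩ hQn
          (Set.union_diff_cancel (Set.singleton_subset_iff.mpr hw0X))
          (Set.disjoint_left.mpr fun _ hx hx2 => hx2.2 hx)
      have hueq : u = w0 := huP
      subst hueq
      exact ⟨γ, hγY, w, hwQ.1, u, hw0X, hall w hwQ.1, e2, by omega, e1⟩
  have hvδ : v ≠ δ := fun h => hvY (h ▸ hδY)
  refine ⟨hXA, Set.insert_subset hvB hYB, ha0, ha1, Set.mem_insert_of_mem _ hb0,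
    Set.mem_insert_of_mem _ hb1, ?_, ?_, ?_⟩
  · intro P Q hPn hQn hPQ hd
    obtain ⟨u, huP, w, hwQ, γ, hγY, γ', hγ'Y, e⟩ := connA P Q hPn hQn hPQ hd
    exact ⟨u, huP, w, hwQ, γ, Set.mem_insert_of_mem _ hγY,
      γ', Set.mem_insert_of_mem _ hγ'Y, e⟩
  · intro P Q hPn hQn hPQ hd
    have hvPQ : v ∈ P ∪ Q := by rw [hPQ]; exact Set.mem_insert _ _
    rcases hvPQ with hvP | hvQ
    · by_cases hP' : (P \ {v}).Nonempty
      · obtain ⟨hun, hdis⟩ := aux_partition_erase hPQ hd hvP hvY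
        obtain ⟨γ, hγP, rest⟩ := connB _ _ hP' hQn hun hdis
        exact ⟨γ, hγP.1, rest⟩
      · have hδQ : δ ∈ Q := aux_mem_other hPQ hP' hvY hδY
        exact ⟨v, hvP, δ, hδQ, r1, hr1X, r2, hr2X, d1, d3, d2, d4⟩
    · by_cases hQ' : (Q \ {v}).Nonempty
      · obtain ⟨hun, hdis⟩ := aux_partition_erase
          (by rw [Set.union_comm]; exact hPQ) hd.symm hvQ hvY
        obtain ⟨γ, hγP, γ', hγ'Q, rest⟩ := connB _ _ hPn hQ'
          (by rw [Set.union_comm]; exact hun) hdis.symm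
        exact ⟨γ, hγP, γ', hγ'Q.1, rest⟩
      · have hδP : δ ∈ P := aux_mem_other (by rw [Set.union_comm]; exact hPQ) hQ' hvY hδY
        exact ⟨δ, hδP, v, hvQ, r2, hr2X, r1, hr1X, d4, d2, d3, d1⟩
  · intro A' B' h' h0 h1
    obtain ⟨hXA', hYB'⟩ := hmin A' B' h' h0 h1
    refine ⟨hXA', Set.insert_subset ?_ hYB'⟩
    obtain ⟨u, huX, hule⟩ := hm1
    obtain ⟨w, hwX, hwge⟩ := hm2
    have huv : u ≠ v := fun h => (Set.disjoint_left.mp hdAB (hXA huX)) (h ▸ hvB)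
    have hwv : w ≠ v := fun h => (Set.disjoint_left.mp hdAB (hXA hwX)) (h ▸ hvB)
    exact aux_force h' (hXA' huX) (hXA' hwX) huv hwv hule hwge

lemma aux_saturate {G : Trigraph V} [Finite V] {A B : Set V} {a0 a1 b0 b1 : V}
    (hdAB : Disjoint A B) (ha01 : a0 ≠ a1) (hb01 : b0 ≠ b1) :
    ∀ (n : ℕ) (X Y : Set V), AuxInv G A B a0 a1 b0 b1 X Y →
      (A \ X).ncard + (B \ Y).ncard ≤ n →
      ∃ X' Y', AuxInv G A B a0 a1 b0 b1 X' Y' ∧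
        (∀ v ∈ A, v ∉ X' → ¬ ((∃ β ∈ Y', G.θ v β ≤ 0) ∧ (∃ β ∈ Y', 0 ≤ G.θ v β))) ∧
        (∀ v ∈ B, v ∉ Y' → ¬ ((∃ u ∈ X', G.θ u v ≤ 0) ∧ (∃ u ∈ X', 0 ≤ G.θ u v))) := by
  intro n
  induction n with
  | zero =>
    intro X Y hInv hle
    have hA0 : A \ X = ∅ := (Set.ncard_eq_zero (Set.toFinite _)).mp (by omega)
    have hB0 : B \ Y = ∅ := (Set.ncard_eq_zero (Set.toFinite _)).mp (by omega)
    refine ⟨X, Y, hInv, ?_, ?_⟩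
    · intro v hvA hvX
      exact absurd (show v ∈ A \ X from ⟨hvA, hvX⟩) (by rw [hA0]; exact Set.notMem_empty v)
    · intro v hvB hvY
      exact absurd (show v ∈ B \ Y from ⟨hvB, hvY⟩) (by rw [hB0]; exact Set.notMem_empty v)
  | succ n ih =>
    intro X Y hInv hle
    by_cases hA : ∃ v, v ∈ A ∧ v ∉ X ∧ (∃ β ∈ Y, G.θ v β ≤ 0) ∧ (∃ β ∈ Y, 0 ≤ G.θ v β)
    · obtain ⟨v, hvA, hvX, hmm1, hmm2⟩ := hA
      have hInv' := aux_extendA hdAB hb01 hInv hvA hvX hmm1 hmm2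
      have hlt : (A \ insert v X).ncard < (A \ X).ncard := by
        apply Set.ncard_lt_ncard ?_ (Set.toFinite _)
        rw [Set.ssubset_def]
        constructor
        · intro x hx
          exact ⟨hx.1, fun h => hx.2 (Set.mem_insert_of_mem _ h)⟩
        · intro hcon
          exact (hcon ⟨hvA, hvX⟩).2 (Set.mem_insert v X)
      exact ih (insert v X) Y hInv' (by omega)
    · by_cases hB : ∃ v, v ∈ B ∧ v ∉ Y ∧ (∃ u ∈ X, G.θ u v ≤ 0) ∧ (∃ u ∈ X, 0 ≤ G.θ u v)
      · obtain ⟨v, hvB, hvY, hmm1, hmm2⟩ := hB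
        have hInv' := aux_extendB hdAB ha01 hInv hvB hvY hmm1 hmm2
        have hlt : (B \ insert v Y).ncard < (B \ Y).ncard := by
          apply Set.ncard_lt_ncard ?_ (Set.toFinite _)
          rw [Set.ssubset_def]
          constructor
          · intro x hx
            exact ⟨hx.1, fun h => hx.2 (Set.mem_insert_of_mem _ h)⟩
          · intro hcon
            exact (hcon ⟨hvB, hvY⟩).2 (Set.mem_insert v Y)
        exact ih X (insert v Y) hInv' (by omega)
      · refine ⟨X, Y, hInv, ?_, ?_⟩
        · intro v hvA hvX hm
          exact hA ⟨v, hvA, hvX, hm.1, hm.2⟩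
        · intro v hvB hvY hm
          exact hB ⟨v, hvB, hvY, hm.1, hm.2⟩

end Trigraph

end AuxSCHPOSC


/-- If a0, a1 are strongly adjacent vertices contained in a square (with the
other two square vertices b1, b0), and some homogeneous pair of strong cliques has both
a0 and a1 in its first part, then there is a square-connected homogeneous pair of strong
cliques (A*, B*) with {a0, a1} ⊆ A* contained in every homogeneous pair of strong cliques
whose first part contains a0 and a1. -/
theorem schposc_minimal {V : Type} [Fintype V] (G : Trigraph V) (a0 a1 : V)
    (hadj : G.StrongAdj a0 a1)
    (hsq : ∃ b0 b1 : V, G.IsSquare a0 a1 b1 b0)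
    (hex : ∃ A B : Set V, G.HPOSC A B ∧ a0 ∈ A ∧ a1 ∈ A) :
    ∃ Astar Bstar : Set V, G.SquareConnected Astar Bstar ∧ a0 ∈ Astar ∧ a1 ∈ Astar ∧
      ∀ A B : Set V, G.HPOSC A B → a0 ∈ A → a1 ∈ A → Astar ⊆ A ∧ Bstar ⊆ B := by
  classical
  obtain ⟨A, B, hAB, ha0A, ha1A⟩ := hex
  obtain ⟨b0, b1, hsq⟩ := hsq
  obtain ⟨hx13, hx24, hx12, hx23, hx34, hx41⟩ := hsq
  have hadj' : G.θ a0 a1 = 1 := hadj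
  have ha01 : a0 ≠ a1 := by
    intro h
    have h0 := G.refl_zero a1
    rw [h] at hadj'
    omega
  have hb01 : b0 ≠ b1 := Ne.symm hx34.1
  have t1 : G.θ a0 b1 ≤ 0 := by rcases hx13.2 with h | h <;> omega
  have t2 : G.θ a1 b0 ≤ 0 := by rcases hx24.2 with h | h <;> omega
  have t3 : 0 ≤ G.θ a1 b1 := by rcases hx23.2 with h | h <;> omega
  have t4 : 0 ≤ G.θ a0 b0 := by
    have hs := G.symm a0 b0
    rcases hx41.2 with h | h <;> omega
  have hforce : ∀ A' B' : Set V, G.HPOSC A' B' → a0 ∈ A' → a1 ∈ A' →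
      b0 ∈ B' ∧ b1 ∈ B' :=
    fun A' B' h' h0 h1 =>
      ⟨Trigraph.aux_force h' h1 h0 hx24.1 (Ne.symm hx41.1) t2 t4,
       Trigraph.aux_force h' h0 h1 hx13.1 hx23.1 t1 t3⟩
  obtain ⟨hb0B, hb1B⟩ := hforce A B hAB ha0A ha1A
  have hdAB : Disjoint A B := hAB.2.2.1
  have base : Trigraph.AuxInv G A B a0 a1 b0 b1 {a0, a1} {b0, b1} := by
    refine ⟨?_, ?_, Set.mem_insert _ _, Set.mem_insert_of_mem _ rfl,
      Set.mem_insert _ _, Set.mem_insert_of_mem _ rfl, ?_, ?_, ?_⟩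
    · exact Set.insert_subset_iff.mpr ⟨ha0A, Set.singleton_subset_iff.mpr ha1A⟩
    · exact Set.insert_subset_iff.mpr ⟨hb0B, Set.singleton_subset_iff.mpr hb1B⟩
    · intro P Q hPn hQn hPQ hd
      rcases Trigraph.aux_pair_split hPn hQn hPQ hd with ⟨h0, h1⟩ | ⟨h1, h0⟩
      · exact ⟨a0, h0, a1, h1, b1, Set.mem_insert_of_mem _ rfl, b0, Set.mem_insert _ _,
          t1, t3, t4, t2⟩
      · exact ⟨a1, h1, a0, h0, b0, Set.mem_insert _ _, b1, Set.mem_insert_of_mem _ rfl,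
          t2, t4, t3, t1⟩
    · intro P Q hPn hQn hPQ hd
      rcases Trigraph.aux_pair_split hPn hQn hPQ hd with ⟨h0, h1⟩ | ⟨h1, h0⟩
      · exact ⟨b0, h0, b1, h1, a1, Set.mem_insert_of_mem _ rfl, a0, Set.mem_insert _ _,
          t2, t4, t3, t1⟩
      · exact ⟨b1, h1, b0, h0, a0, Set.mem_insert _ _, a1, Set.mem_insert_of_mem _ rfl,
          t1, t3, t4, t2⟩
    · intro A' B' h' h0 h1
      obtain ⟨hb0', hb1'⟩ := hforce A' B' h' h0 h1
      exact ⟨Set.insert_subset_iff.mpr ⟨h0, Set.singleton_subset_iff.mpr h1⟩,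
        Set.insert_subset_iff.mpr ⟨hb0', Set.singleton_subset_iff.mpr hb1'⟩⟩
  obtain ⟨X, Y, hInv, satA, satB⟩ :=
    Trigraph.aux_saturate hdAB ha01 hb01
      ((A \ {a0, a1}).ncard + (B \ {b0, b1}).ncard) {a0, a1} {b0, b1} base le_rfl
  obtain ⟨hXA, hYB, hXa0, hXa1, hYb0, hYb1, connA, connB, hmin⟩ := hInv
  have hcA : G.IsStrongClique A := hAB.2.2.2.1
  have hcB : G.IsStrongClique B := hAB.2.2.2.2.1
  have hXc : G.IsStrongClique X := hcA.mono hXA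
  have hYc : G.IsStrongClique Y := hcB.mono hYB
  have hdXY : Disjoint X Y := hdAB.mono hXA hYB
  have hhom : ∀ v ∉ X ∪ Y,
      (G.StronglyComplete {v} X ∨ G.StronglyAnticomplete {v} X) ∧
      (G.StronglyComplete {v} Y ∨ G.StronglyAnticomplete {v} Y) := by
    intro v hv
    have hvX : v ∉ X := fun h => hv (Set.mem_union_left _ h)
    have hvY : v ∉ Y := fun h => hv (Set.mem_union_right _ h)
    by_cases hvA : v ∈ A
    · refine ⟨Or.inl ?_, ?_⟩
      · intro u hu x hx
        have hu' : u = v := hu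
        subst hu'
        exact hcA hvA (hXA hx) (fun h => hvX (h ▸ hx))
      · have hnm := satA v hvA hvX
        rw [not_and_or] at hnm
        rcases hnm with h | h
        · push_neg at h
          left
          intro u hu x hx
          have hu' : u = v := hu
          subst hu'
          show G.θ u x = 1
          have h1 := h x hx
          rcases G.range_mem u x with h2 | h2 | h2 <;> omega
        · push_neg at h
          right
          intro u hu x hx
          have hu' : u = v := hu
          subst hu'
          show G.θ u x = -1
          have h1 := h x hx
          rcases G.range_mem u x with h2 | h2 | h2 <;> omega
    · by_cases hvB : v ∈ B
      · refine ⟨?_, Or.inl ?_⟩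
        · have hnm := satB v hvB hvY
          rw [not_and_or] at hnm
          rcases hnm with h | h
          · push_neg at h
            left
            intro u hu x hx
            have hu' : u = v := hu
            subst hu'
            show G.θ u x = 1
            have h1 := h x hx
            have h2 := G.symm u x
            rcases G.range_mem x u with h3 | h3 | h3 <;> omega
          · push_neg at h
            right
            intro u hu x hx
            have hu' : u = v := hu
            subst hu'
            show G.θ u x = -1
            have h1 := h x hx
            have h2 := G.symm u x
            rcases G.range_mem x u with h3 | h3 | h3 <;> omega
        · intro u hu x hx
          have hu' : u = v := hu
          subst hu'
          exact hcB hvB (hYB hx) (fun h => hvY (h ▸ hx))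
      · have hout : v ∉ A ∪ B := by rintro (h | h); exacts [hvA h, hvB h]
        obtain ⟨hA', hB'⟩ := hAB.2.2.2.2.2.2 v hout
        constructor
        · rcases hA' with h | h
          · exact Or.inl fun u hu x hx => h u hu x (hXA hx)
          · exact Or.inr fun u hu x hx => h u hu x (hXA hx)
        · rcases hB' with h | h
          · exact Or.inl fun u hu x hx => h u hu x (hYB hx)
          · exact Or.inr fun u hu x hx => h u hu x (hYB hx)
  have hposcXY : G.HPOSC X Y := by
    refine ⟨⟨a0, hXa0⟩, ⟨b0, hYb0⟩, hdXY, hXc, hYc, ?_, hhom⟩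
    rintro ⟨a, b, hXa, hYb⟩
    apply ha01
    have h0 : a0 = a := by rw [hXa] at hXa0; exact hXa0
    have h1 : a1 = a := by rw [hXa] at hXa1; exact hXa1
    rw [h0, h1]
  have hsc : G.SquareConnected X Y := by
    refine ⟨hposcXY, ?_, ?_⟩
    · intro P Q hPn hQn hPQ hd
      obtain ⟨u, huP, w, hwQ, γ, hγ, γ', hγ', e1, e2, e3, e4⟩ := connA P Q hPn hQn hPQ hd
      have huX : u ∈ X := by rw [← hPQ]; exact Set.mem_union_left _ huP
      have hwX : w ∈ X := by rw [← hPQ]; exact Set.mem_union_right _ hwQ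
      have huw : u ≠ w := fun h => Set.disjoint_left.mp hd huP (h ▸ hwQ)
      obtain ⟨hsq', hsub⟩ := Trigraph.aux_build_square hXA hYB hdAB hcA hcB
        huX hwX hγ hγ' e1 e2 e3 e4 (Or.inl huw)
      exact ⟨u, w, γ, γ', hsq', hsub,
        ⟨u, Set.mem_inter (Set.mem_insert _ _) huP⟩,
        ⟨w, Set.mem_inter (Set.mem_insert_of_mem _ (Set.mem_insert _ _)) hwQ⟩⟩
    · intro P Q hPn hQn hPQ hd
      obtain ⟨γ, hγP, γ', hγ'Q, u, huX, w, hwX, e1, e2, e3, e4⟩ := connB P Q hPn hQn hPQ hd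
      have hγY : γ ∈ Y := by rw [← hPQ]; exact Set.mem_union_left _ hγP
      have hγ'Y : γ' ∈ Y := by rw [← hPQ]; exact Set.mem_union_right _ hγ'Q
      have hγγ' : γ ≠ γ' := fun h => Set.disjoint_left.mp hd hγP (h ▸ hγ'Q)
      obtain ⟨hsq', hsub⟩ := Trigraph.aux_build_square hXA hYB hdAB hcA hcB
        huX hwX hγY hγ'Y e1 e2 e3 e4 (Or.inr hγγ')
      exact ⟨u, w, γ, γ', hsq', hsub,
        ⟨γ, Set.mem_inter (Set.mem_insert_of_mem _ (Set.mem_insert_of_mem _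
          (Set.mem_insert _ _))) hγP⟩,
        ⟨γ', Set.mem_inter (Set.mem_insert_of_mem _ (Set.mem_insert_of_mem _
          (Set.mem_insert_of_mem _ rfl))) hγ'Q⟩⟩
  exact ⟨X, Y, hsc, hXa0, hXa1, hmin⟩
end
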